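/- arXiv:1706.00283 — 8 statements merged into one kernel-verified Lean document; each statement's English description precedes it below -/
import Mathlib

section
/- Let (y_1,...,y_n) be a sequence of integers with each y_i ≥ -1 and n_0 + Σ_{i=1}^n y_i = 0 for some positive integer n_0. Then there are exactly n_0 indices j ∈ {0,...,n-1} such that the cyclic shift (y_{j+1},...,y_n,y_1,...,y_j) has all partial sums s_i = y_{j+1}+...+y_{j+i} (indices mod n) satisfying n_0 + s_i > 0 for all 1 ≤ i ≤ n-1. -/
open Finset Classical

private def Mf (S : ℕ → ℤ) : ℕ → ℤ
  | 0 => S 0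
  | (T+1) => min (Mf S T) (S (T+1))

private lemma Mf_le (S : ℕ → ℤ) : ∀ T m, m ≤ T → Mf S T ≤ S m := by
  intro T
  induction T with
  | zero =>
    intro m hm
    have : m = 0 := Nat.le_zero.mp hm
    subst this; exact le_refl _
  | succ T ih =>
    intro m hm
    by_cases h : m ≤ T
    · exact le_trans (min_le_left _ _) (ih m h)
    · have : m = T + 1 := by omega
      subst this; exact min_le_right _ _

private lemma Mf_exists (S : ℕ → ℤ) : ∀ T, ∃ m, m ≤ T ∧ Mf S T = S m := by
  intro T
  induction T with
  | zero => exact ⟨0, le_refl 0, rfl⟩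
  | succ T ih =>
    obtain ⟨m, hm, he⟩ := ih
    rcases min_cases (Mf S T) (S (T+1)) with ⟨h1, _⟩ | ⟨h1, _⟩
    · exact ⟨m, le_trans hm (Nat.le_succ T), by simp only [Mf, h1]; exact he⟩
    · exact ⟨T+1, le_refl _, by simp only [Mf, h1]⟩

private lemma record_count (S : ℕ → ℤ) (hstep : ∀ m, S m - 1 ≤ S (m+1)) :
    ∀ T, (((Finset.Icc 1 T).filter (fun t => ∀ m < t, S t < S m)).card : ℤ)
      = S 0 - Mf S T := by
  intro T
  induction T with
  | zero => simp [Mf]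
  | succ T ih =>
    have hins : Finset.Icc 1 (T+1) = insert (T+1) (Finset.Icc 1 T) := by
      ext x; simp only [Finset.mem_Icc, Finset.mem_insert]; omega
    have hrec : (∀ m < T+1, S (T+1) < S m) ↔ S (T+1) < Mf S T := by
      constructor
      · intro h
        obtain ⟨m, hm, he⟩ := Mf_exists S T
        rw [he]; exact h m (Nat.lt_succ_of_le hm)
      · intro h m hm
        exact lt_of_lt_of_le h (Mf_le S T m (Nat.lt_succ_iff.mp hm))
    have hnotmem : (T+1) ∉ Finset.Icc 1 T := by simp
    by_cases h : ∀ m < T+1, S (T+1) < S m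
    · have h1 : S (T+1) < Mf S T := hrec.mp h
      have h2 : Mf S T - 1 ≤ S (T+1) := by
        have := Mf_le S T T (le_refl T)
        have := hstep T
        linarith
      have h3 : Mf S (T+1) = Mf S T - 1 := by
        simp only [Mf]
        omega
      rw [hins, Finset.filter_insert, if_pos h,
        Finset.card_insert_of_notMem (fun hc => hnotmem (Finset.mem_of_mem_filter _ hc))]
      push_cast
      rw [h3]
      omega
    · have h1 : ¬ S (T+1) < Mf S T := fun hc => h (hrec.mpr hc)
      have h3 : Mf S (T+1) = Mf S T := by
        simp only [Mf]; omega
      rw [hins, Finset.filter_insert, if_neg h, ih, h3]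

/-- **Cyclic lemma** (Spitzer's combinatorial lemma): if `y₁,…,yₙ` are integers with
each `yᵢ ≥ -1` and `n₀ + ∑ yᵢ = 0` for a positive integer `n₀`, then exactly `n₀` cyclic
shifts of the sequence have all proper partial sums `sᵢ` satisfying `n₀ + sᵢ > 0`. -/
theorem cyclic_lemma (n n₀ : ℕ) (hn : 0 < n) (hn₀ : 0 < n₀)
    (y : Fin n → ℤ) (hy : ∀ i, -1 ≤ y i)
    (hsum : (n₀ : ℤ) + ∑ i, y i = 0) :
    ((Finset.range n).filter (fun j =>
      ∀ i ∈ Finset.Icc 1 (n - 1),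
        0 < (n₀ : ℤ) + ∑ k ∈ Finset.range i, y ⟨(j + k) % n, Nat.mod_lt _ hn⟩)).card
      = n₀ := by
  set f : ℕ → ℤ := fun k => y ⟨k % n, Nat.mod_lt _ hn⟩ with hf
  set S : ℕ → ℤ := fun m => ∑ k ∈ Finset.range m, f k with hS
  have hS0 : S 0 = 0 := by simp [hS]
  have hSsucc : ∀ m, S (m+1) = S m + f m := by
    intro m; simp [hS, Finset.sum_range_succ]
  have hstep : ∀ m, S m - 1 ≤ S (m+1) := by
    intro m
    have := hy ⟨m % n, Nat.mod_lt _ hn⟩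
    have hfm : -1 ≤ f m := this
    rw [hSsucc]; linarith
  have hfper : ∀ m, f (m + n) = f m := by
    intro m; simp [hf, Nat.add_mod_right]
  have hSn : S n = -(n₀ : ℤ) := by
    have h1 : S n = ∑ i : Fin n, y i := by
      show (∑ k ∈ Finset.range n, f k) = _
      rw [← Fin.sum_univ_eq_sum_range (fun k => f k) n]
      apply Finset.sum_congr rfl
      intro i _
      have : (⟨(i : ℕ) % n, Nat.mod_lt _ hn⟩ : Fin n) = i :=
        Fin.ext (Nat.mod_eq_of_lt i.isLt)
      simp only [hf]
      rw [this]
    rw [h1]; linarith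
  have hper : ∀ m, S (m + n) = S m - n₀ := by
    intro m
    induction m with
    | zero => simp [hS0, hSn]
    | succ m ih =>
      have e1 : S (m + 1 + n) = S (m + n) + f (m + n) := by
        have h : m + 1 + n = (m + n) + 1 := by ring
        rw [h, hSsucc]
      rw [e1, hfper, ih, hSsucc]; ring
  have hperk : ∀ k m, S (m + k * n) = S m - (k : ℤ) * n₀ := by
    intro k
    induction k with
    | zero => intro m; simp
    | succ k ih =>
      intro m
      have h : m + (k+1) * n = (m + k * n) + n := by ring
      rw [h, hper, ih]
      push_cast; ring
  have hshift : ∀ j i, S (j + i) = S j + ∑ k ∈ Finset.range i, f (j + k) := by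
    intro j i
    induction i with
    | zero => simp
    | succ i ih =>
      have h : j + (i+1) = (j + i) + 1 := by ring
      rw [h, hSsucc, ih, Finset.sum_range_succ]; ring
  have hreach : ∀ j m, m < j + n → ∃ i, i < n ∧ S (j + i) ≤ S m := by
    intro j m hm
    set d := j + n - 1 - m with hd
    have hdm := Nat.div_add_mod d n
    have hcomm : d / n * n = n * (d / n) := Nat.mul_comm _ _
    have hmod : d % n < n := Nat.mod_lt _ hn
    refine ⟨m + (d/n)*n - j, by omega, ?_⟩
    have heq : j + (m + (d/n)*n - j) = m + (d/n)*n := by omega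
    rw [heq, hperk]
    have : (0 : ℤ) ≤ ((d/n : ℕ) : ℤ) * n₀ := by positivity
    linarith
  have hn₀' : (0 : ℤ) < n₀ := by exact_mod_cast hn₀
  have key : ∀ j, j < n →
      ((∀ i ∈ Finset.Icc 1 (n-1),
        0 < (n₀ : ℤ) + ∑ k ∈ Finset.range i, y ⟨(j + k) % n, Nat.mod_lt _ hn⟩)
      ↔ (∀ m < j + n, S (j + n) < S m)) := by
    intro j hj
    have hsum_eq : ∀ i, (∑ k ∈ Finset.range i, y ⟨(j + k) % n, Nat.mod_lt _ hn⟩)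
        = S (j + i) - S j := by
      intro i
      have h1 : (∑ k ∈ Finset.range i, y ⟨(j + k) % n, Nat.mod_lt _ hn⟩)
          = ∑ k ∈ Finset.range i, f (j + k) := rfl
      rw [h1, hshift]; ring
    constructor
    · intro h m hm
      obtain ⟨i, hi, hle⟩ := hreach j m hm
      refine lt_of_lt_of_le ?_ hle
      rcases Nat.eq_zero_or_pos i with rfl | hip
      · rw [hper]; simp only [Nat.add_zero]; linarith
      · have h2 := h i (Finset.mem_Icc.mpr ⟨hip, by omega⟩)
        rw [hsum_eq] at h2
        rw [hper]
        linarith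
    · intro h i hi
      rw [Finset.mem_Icc] at hi
      have h2 := h (j + i) (by omega)
      rw [hper] at h2
      rw [hsum_eq]
      linarith
  -- count records
  set Rec : ℕ → Prop := fun t => ∀ m < t, S t < S m with hRec
  have hbij : ((Finset.range n).filter (fun j =>
      ∀ i ∈ Finset.Icc 1 (n - 1),
        0 < (n₀ : ℤ) + ∑ k ∈ Finset.range i, y ⟨(j + k) % n, Nat.mod_lt _ hn⟩)).card
      = ((Finset.Ico n (2*n)).filter Rec).card := by
    apply Finset.card_bij (fun j _ => j + n)
    · intro a ha
      simp only [Finset.mem_filter, Finset.mem_range] at ha ⊢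
      exact ⟨Finset.mem_Ico.mpr ⟨by omega, by omega⟩, (key a ha.1).mp ha.2⟩
    · intro a _ b _ hab; omega
    · intro b hb
      simp only [Finset.mem_filter, Finset.mem_Ico] at hb
      refine ⟨b - n, ?_, by omega⟩
      simp only [Finset.mem_filter, Finset.mem_range]
      constructor
      · omega
      · apply (key (b - n) (by omega)).mpr
        have : b - n + n = b := by omega
        rw [this]; exact hb.2
  rw [hbij]
  have hsplit : Finset.Icc 1 (2*n-1) = Finset.Icc 1 (n-1) ∪ Finset.Ico n (2*n) := by
    ext x; simp only [Finset.mem_Icc, Finset.mem_Ico, Finset.mem_union]; omega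
  have hdisj : Disjoint (Finset.Icc 1 (n-1)) (Finset.Ico n (2*n)) := by
    rw [Finset.disjoint_left]
    intro a ha hb
    rw [Finset.mem_Icc] at ha; rw [Finset.mem_Ico] at hb; omega
  have hcards : ((Finset.Icc 1 (2*n-1)).filter Rec).card
      = ((Finset.Icc 1 (n-1)).filter Rec).card + ((Finset.Ico n (2*n)).filter Rec).card := by
    rw [hsplit, Finset.filter_union,
      Finset.card_union_of_disjoint (Finset.disjoint_filter_filter hdisj)]
  have hM : Mf S (2*n-1) = Mf S (n-1) - n₀ := by
    apply le_antisymm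
    · obtain ⟨m, hm, he⟩ := Mf_exists S (n-1)
      have h1 : Mf S (2*n-1) ≤ S (m + n) := Mf_le S (2*n-1) (m+n) (by omega)
      rw [hper, ← he] at h1
      exact h1
    · obtain ⟨m, hm, he⟩ := Mf_exists S (2*n-1)
      rw [he]
      by_cases h : m ≤ n - 1
      · have := Mf_le S (n-1) m h
        linarith
      · have hm' : m - n ≤ n - 1 := by omega
        have := Mf_le S (n-1) (m-n) hm'
        have heq : m - n + n = m := by omega
        have := hper (m - n)
        rw [heq] at this
        linarith
  have r1 := record_count S hstep (2*n-1)
  have r2 := record_count S hstep (n-1)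
  have hfinal : (((Finset.Ico n (2*n)).filter Rec).card : ℤ) = n₀ := by
    have : (((Finset.Icc 1 (2*n-1)).filter Rec).card : ℤ)
        = (((Finset.Icc 1 (n-1)).filter Rec).card : ℤ)
          + (((Finset.Ico n (2*n)).filter Rec).card : ℤ) := by
      exact_mod_cast hcards
    rw [r1, r2, hM] at this
    linarith
  exact_mod_cast hfinal
end

section
/- Let (Y,Z) be an ℕ²-valued random variable and suppose a branching process starts with n_0 particles of type L and m_0 of type S; each type-L particle independently has Y children of type L and Z children of type S, and type-S particles have no children. Then for all integers n ≥ 1 and m ≥ 0, the probability that the total number of type-L particles equals n and type-S particles equals m is (n_0/n)·P(n_0 + Σ_{j=1}^n Y_j = n, m_0 + Σ_{j=1}^n Z_j = m), where (Y_j,Z_j) are i.i.d. copies of (Y,Z). -/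
/-!
Cyclic shifts of the i.i.d. vector `((Y_j, Z_j))_{j<n}` have the same law and leave the totals
`∑ Y_j`, `∑ Z_j` unchanged. By the cycle lemma, when `n₀ + ∑ Y_j = n` exactly `n₀` of the `n`
cyclic shifts of the steps `Y_j - 1` keep the walk `n₀ + ∑_{j<k} (Y_j - 1)` positive for `k < n`;
averaging over the `n` shifts gives the factor `n₀ / n`.

For the cycle lemma, extend the steps periodically. The walk is skip-free downwards and loses
`n₀` per period, so it reaches exactly `n₀` new strict minima during the second period, and a
shift is good iff the walk reaches a new strict minimum one period after the shift.
-/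

open MeasureTheory ProbabilityTheory Finset
open scoped ENNReal

namespace SkipFreeWalk

variable {S : ℕ → ℤ}

def IsLadderEpoch (S : ℕ → ℤ) (t : ℕ) : Prop := ∀ j < t, S t < S j

instance (S : ℕ → ℤ) : DecidablePred (IsLadderEpoch S) :=
  fun t => inferInstanceAs (Decidable (∀ j < t, S t < S j))

theorem exists_eq_of_le (hS0 : S 0 = 0) (hS : ∀ t, S t - 1 ≤ S (t + 1)) {c : ℤ} (hc : c ≤ 0) :
    ∀ {t}, S t ≤ c → ∃ s ≤ t, S s = c
  | 0, h => ⟨0, le_rfl, by omega⟩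
  | t + 1, h => by
    by_cases ht : S t ≤ c
    · obtain ⟨s, hs, hSs⟩ := exists_eq_of_le hS0 hS hc ht
      exact ⟨s, by omega, hSs⟩
    · exact ⟨t + 1, le_rfl, by have := hS t; omega⟩

theorem card_filter_isLadderEpoch_range (hS0 : S 0 = 0) (hS : ∀ t, S t - 1 ≤ S (t + 1))
    {N t₀ : ℕ} (ht₀ : t₀ < N) (hmin : ∀ t < N, S t₀ ≤ S t) :
    #{t ∈ range N | IsLadderEpoch S t} = (1 - S t₀).toNat := by
  have hmin0 : S t₀ ≤ 0 := hS0 ▸ hmin 0 (by omega)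
  rw [show (1 - S t₀).toNat = #(Icc (S t₀) 0) by rw [Int.card_Icc]; omega]
  -- The ladder epochs are the first hitting times of the levels `S t₀, …, 0`.
  refine card_bij (fun t _ => S t) ?_ ?_ ?_
  · intro t ht
    simp only [mem_filter, mem_range] at ht
    obtain ⟨htN, hlad⟩ := ht
    refine mem_Icc.2 ⟨hmin t htN, ?_⟩
    rcases Nat.eq_zero_or_pos t with rfl | ht0
    · exact hS0.le
    · exact hS0 ▸ (hlad 0 ht0).le
  · intro a ha b hb hab
    simp only [mem_filter] at ha hb
    by_contra hne
    rcases Nat.lt_or_gt_of_ne hne with h | h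
    · exact (hb.2 a h).ne hab.symm
    · exact (ha.2 b h).ne hab
  · intro c hc
    rw [mem_Icc] at hc
    have hhit : ∃ s, S s = c :=
      (exists_eq_of_le hS0 hS hc.2 hc.1).imp fun _ h => h.2
    refine ⟨Nat.find hhit, ?_, Nat.find_spec hhit⟩
    obtain ⟨s, hst₀, hSs⟩ := exists_eq_of_le hS0 hS hc.2 hc.1
    refine mem_filter.2 ⟨mem_range.2 ((Nat.find_min' hhit hSs).trans_lt (hst₀.trans_lt ht₀)), ?_⟩
    intro j hj
    rw [Nat.find_spec hhit]
    by_contra! hjc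
    obtain ⟨s', hs', hSs'⟩ := exists_eq_of_le hS0 hS hc.2 hjc
    exact Nat.find_min hhit (hs'.trans_lt hj) hSs'

theorem isLadderEpoch_add_iff {n n₀ : ℕ} (hper : ∀ t, S (t + n) = S t - n₀) {r : ℕ}
    (hr : r < n) : IsLadderEpoch S (n + r) ↔ ∀ k < n, S (n + r) < S (r + k) := by
  refine ⟨fun h k hk => h (r + k) (by omega), fun h j hj => ?_⟩
  rcases le_or_gt r j with hrj | hjr
  · simpa [Nat.add_sub_cancel' hrj] using h (j - r) (by omega)
  · have := h (j + n - r) (by omega)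
    rw [show r + (j + n - r) = j + n by omega, hper] at this
    omega

theorem card_filter_isLadderEpoch_add (hS0 : S 0 = 0) (hS : ∀ t, S t - 1 ≤ S (t + 1))
    {n n₀ : ℕ} (hper : ∀ t, S (t + n) = S t - n₀) :
    #{r ∈ range n | IsLadderEpoch S (n + r)} = n₀ := by
  rcases Nat.eq_zero_or_pos n with rfl | hn
  · have := hper 0
    simp only [add_zero, range_zero, filter_empty, card_empty] at this ⊢
    omega
  obtain ⟨t₁, ht₁, hmin⟩ := exists_min_image (range n) S (nonempty_range_iff.2 hn.ne')
  rw [mem_range] at ht₁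
  have hmin₁ : ∀ t < n, S t₁ ≤ S t := fun t ht => hmin t (mem_range.2 ht)
  have hmin₂ : ∀ t < n + n, S (t₁ + n) ≤ S t := by
    intro t ht
    rw [hper]
    rcases lt_or_ge t n with htn | htn
    · linarith [hmin₁ t htn]
    · rw [← Nat.sub_add_cancel htn, hper]
      linarith [hmin₁ (t - n) (by omega)]
  have hsplit := card_filter_isLadderEpoch_range hS0 hS (by omega : t₁ + n < n + n) hmin₂
  rw [card_filter, sum_range_add, ← card_filter, ← card_filter,
    card_filter_isLadderEpoch_range hS0 hS ht₁ hmin₁, hper] at hsplit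
  have := hmin₁ 0 hn
  omega

end SkipFreeWalk

open SkipFreeWalk in
theorem cycle_lemma {n n₀ : ℕ} {x : ℕ → ℤ} (hper : Function.Periodic x n) (hx : ∀ j, -1 ≤ x j)
    (hsum : (n₀ : ℤ) + ∑ j ∈ range n, x j = 0) :
    #{r ∈ range n | ∀ k < n, 0 < (n₀ : ℤ) + ∑ j ∈ range k, x (r + j)} = n₀ := by
  set S : ℕ → ℤ := fun t => ∑ j ∈ range t, x j with hSdef
  have hS0 : S 0 = 0 := sum_range_zero x
  have hS : ∀ t, S t - 1 ≤ S (t + 1) := fun t => by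
    simp only [hSdef, sum_range_succ]; linarith [hx t]
  have hshift : ∀ r k, S (r + k) = S r + ∑ j ∈ range k, x (r + j) := fun r k => sum_range_add x r k
  have hSper : ∀ t, S (t + n) = S t - n₀ := fun t => by
    have hper' : ∀ j, x (n + j) = x j := fun j => add_comm n j ▸ hper j
    rw [add_comm, hshift]
    simp only [hSdef, hper']
    linarith
  refine (congrArg card (filter_congr fun r hr => ?_)).trans
    (card_filter_isLadderEpoch_add hS0 hS hSper)
  rw [isLadderEpoch_add_iff hSper (mem_range.1 hr), add_comm n r, hSper]
  refine forall₂_congr fun k _ => ?_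
  rw [hshift]
  constructor <;> intro h <;> linarith

theorem card_mul_measure_eq_of_sum_indicator_eq {X ι : Type*} [MeasurableSpace X] [Fintype ι]
    {P : Measure X} {T : ι → X → X} (hT : ∀ r, MeasurePreserving (T r) P P) {A B : Set X}
    (hA : MeasurableSet A) (hB : MeasurableSet B) (c : ℝ≥0∞)
    (hcount : ∀ x, ∑ r, A.indicator 1 (T r x) = c * B.indicator 1 x) :
    Fintype.card ι * P A = c * P B :=
  calc Fintype.card ι * P A = ∑ r, P (T r ⁻¹' A) := by
        simp [fun r => (hT r).measure_preimage hA.nullMeasurableSet]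
    _ = ∑ r, ∫⁻ x, A.indicator 1 (T r x) ∂P := by
        simp_rw [← lintegral_indicator_one (hA.preimage (hT _).measurable)]; rfl
    _ = ∫⁻ x, c * B.indicator 1 x ∂P := by
        have hmeas : ∀ r ∈ univ, Measurable fun x => A.indicator (1 : X → ℝ≥0∞) (T r x) :=
          fun r _ => (measurable_one.indicator hA).comp (hT r).measurable
        rw [← lintegral_finsetSum _ hmeas]
        exact lintegral_congr hcount
    _ = c * P B := by
        rw [lintegral_const_mul _ (measurable_one.indicator hB), lintegral_indicator_one hB]

theorem measurePreserving_comp_equiv_pi {α ι : Type*} [MeasurableSpace α] [Fintype ι]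
    (ν : Measure α) [SigmaFinite ν] (σ : ι ≃ ι) :
    MeasurePreserving (fun v : ι → α => v ∘ σ) (Measure.pi fun _ => ν) (Measure.pi fun _ => ν) := by
  have hσ : (fun v : ι → α => v ∘ σ) = MeasurableEquiv.piCongrLeft (fun _ => α) σ.symm := by
    funext v i
    rw [MeasurableEquiv.coe_piCongrLeft, Equiv.piCongrLeft_apply_eq_cast]
    simp
  rw [hσ]
  exact measurePreserving_piCongrLeft (fun _ => ν) σ.symm

theorem map_eq_pi_of_iIndepFun_of_identDistrib {Ω Ω' ι β : Type*} [MeasurableSpace Ω]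
    [MeasurableSpace Ω'] [MeasurableSpace β] [Fintype ι] {μ : Measure Ω} {ν : Measure Ω'}
    {X : ι → Ω → β} {X₀ : Ω' → β} (hindep : iIndepFun X μ)
    (hident : ∀ i, IdentDistrib (X i) X₀ μ ν) :
    μ.map (fun ω i => X i ω) = Measure.pi fun _ => ν.map X₀ := by
  rw [hindep.map_fun_eq_pi_map fun i => (hident i).aemeasurable_fst]
  simp_rw [(hident _).map_eq]

def totalsEq (n₀ m₀ n m : ℕ) : Set (Fin n → ℕ × ℕ) :=
  {v | n₀ + ∑ i, (v i).1 = n ∧ m₀ + ∑ i, (v i).2 = m}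

theorem mk_mem_totalsEq_iff {n₀ m₀ n m : ℕ} (w : ℕ → ℕ × ℕ) :
    (fun i : Fin n => w i) ∈ totalsEq n₀ m₀ n m ↔
      n₀ + ∑ j ∈ range n, (w j).1 = n ∧ m₀ + ∑ j ∈ range n, (w j).2 = m := by
  simp only [totalsEq, Set.mem_ofPred_eq, Fin.sum_univ_eq_sum_range (fun j => (w j).1),
    Fin.sum_univ_eq_sum_range (fun j => (w j).2)]

theorem add_sum_sub_one_eq_zero_iff {n₀ n : ℕ} (y : ℕ → ℕ) :
    (n₀ : ℤ) + ∑ j ∈ range n, ((y j : ℤ) - 1) = 0 ↔ n₀ + ∑ j ∈ range n, y j = n := by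
  rw [sum_sub_distrib, ← Nat.cast_sum]
  simp only [sum_const, card_range, nsmul_eq_mul, mul_one]
  omega

section OffspringVectors

variable {n : ℕ} [NeZero n]

/-- In terms of the offspring vector `v j = (Y_j, Z_j)`, the event of the theorem is
`walkStaysPositive n₀ ∩ totalsEq n₀ m₀ n m`. -/
def walkStaysPositive (n₀ : ℕ) : Set (Fin n → ℕ × ℕ) :=
  {v | ∀ k < n, 0 < (n₀ : ℤ) + ∑ j ∈ range k, (((v (Fin.ofNat n j)).1 : ℤ) - 1)}

open Classical in
theorem card_rotate_mem_walkStaysPositive {n₀ : ℕ} {v : Fin n → ℕ × ℕ}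
    (hv : n₀ + ∑ i, (v i).1 = n) :
    #{r : Fin n | (fun i => v (i + r)) ∈ walkStaysPositive n₀} = n₀ := by
  set x : ℕ → ℤ := fun j => ((v (Fin.ofNat n j)).1 : ℤ) - 1
  have hper : Function.Periodic x n := fun j => by
    simp only [x, Fin.ofNat, Nat.add_mod_right]
  have hsum : (n₀ : ℤ) + ∑ j ∈ range n, x j = 0 := by
    rw [sum_sub_distrib, ← Fin.sum_univ_eq_sum_range]
    simp only [Fin.ofNat_val_eq_self, sum_const, card_range]
    push_cast [← hv]
    simp
  have hrot : ∀ (r : Fin n) j, Fin.ofNat n j + r = Fin.ofNat n (r + j) := fun r j => by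
    ext; simp [Fin.val_add, Nat.add_mod, add_comm]
  refine Eq.trans ?_ (cycle_lemma hper (fun j => by simp only [x]; omega) hsum)
  rw [card_filter, card_filter, ← Fin.sum_univ_eq_sum_range]
  simp only [walkStaysPositive, Set.mem_ofPred_eq, hrot, x]

theorem rotate_mem_totalsEq_iff {n₀ m₀ m : ℕ} {v : Fin n → ℕ × ℕ} (r : Fin n) :
    (fun i => v (i + r)) ∈ totalsEq n₀ m₀ n m ↔ v ∈ totalsEq n₀ m₀ n m := by
  have hshift : ∀ f : Fin n → ℕ, ∑ i, f (i + r) = ∑ i, f i :=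
    fun f => Fintype.sum_equiv (Equiv.addRight r) _ _ fun _ => rfl
  simp only [totalsEq, Set.mem_ofPred_eq, hshift fun i => (v i).1, hshift fun i => (v i).2]

theorem sum_indicator_rotate_walkStaysPositive_inter_totalsEq (n₀ m₀ m : ℕ)
    (v : Fin n → ℕ × ℕ) :
    ∑ r : Fin n, (walkStaysPositive n₀ ∩ totalsEq n₀ m₀ n m).indicator (1 : (Fin n → ℕ × ℕ) → ℝ≥0∞)
        (fun i => v (i + r)) = n₀ * (totalsEq n₀ m₀ n m).indicator 1 v := by
  classical
  by_cases hv : v ∈ totalsEq n₀ m₀ n m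
  · simp only [Set.indicator_apply, Set.mem_inter_iff, rotate_mem_totalsEq_iff, hv, and_true,
      Pi.one_apply, if_true, mul_one]
    rw [sum_boole, card_rotate_mem_walkStaysPositive hv.1]
  · simp [rotate_mem_totalsEq_iff, hv]

theorem mk_mem_walkStaysPositive_iff (n₀ : ℕ) (w : ℕ → ℕ × ℕ) :
    (fun i : Fin n => w i) ∈ walkStaysPositive n₀ ↔
      ∀ k < n, 0 < (n₀ : ℤ) + ∑ j ∈ range k, (((w j).1 : ℤ) - 1) := by
  simp only [walkStaysPositive, Set.mem_ofPred_eq]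
  refine forall₂_congr fun k hk => ?_
  rw [sum_congr rfl fun j hj => by
    rw [Fin.val_ofNat, Nat.mod_eq_of_lt ((mem_range.1 hj).trans hk)]]

end OffspringVectors

theorem otter_dwass_sesqui_type_general
    {Ω : Type*} [MeasurableSpace Ω] (μ : Measure Ω) [IsProbabilityMeasure μ]
    (Y Z : ℕ → Ω → ℕ)
    (hindep : iIndepFun (fun j ω => (Y j ω, Z j ω)) μ)
    (hident : ∀ j, IdentDistrib (fun ω => (Y j ω, Z j ω)) (fun ω => (Y 0 ω, Z 0 ω)) μ μ)
    (n₀ m₀ : ℕ) (n m : ℕ) (hn : 1 ≤ n) :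
    μ {ω | (∀ k < n, 0 < (n₀ : ℤ) + ∑ j ∈ Finset.range k, ((Y j ω : ℤ) - 1)) ∧
        (n₀ : ℤ) + ∑ j ∈ Finset.range n, ((Y j ω : ℤ) - 1) = 0 ∧
        m₀ + ∑ j ∈ Finset.range n, Z j ω = m}
      = (n₀ : ENNReal) / n *
        μ {ω | n₀ + ∑ j ∈ Finset.range n, Y j ω = n ∧
            m₀ + ∑ j ∈ Finset.range n, Z j ω = m} := by
  have : NeZero n := ⟨by omega⟩
  set vec : Ω → Fin n → ℕ × ℕ := fun ω i => (Y i ω, Z i ω)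
  set P := Measure.pi fun _ : Fin n => μ.map fun ω => (Y 0 ω, Z 0 ω)
  have hlaw : μ.map vec = P :=
    map_eq_pi_of_iIndepFun_of_identDistrib (hindep.precomp Fin.val_injective) fun i => hident i
  have hvec : AEMeasurable vec μ := aemeasurable_pi_lambda _ fun i => (hident i).aemeasurable_fst
  have hcount :
      n * P (walkStaysPositive n₀ ∩ totalsEq n₀ m₀ n m) = n₀ * P (totalsEq n₀ m₀ n m) := by
    simpa using card_mul_measure_eq_of_sum_indicator_eq
      (T := fun (r : Fin n) (v : Fin n → ℕ × ℕ) i => v (i + r))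
      (fun r => measurePreserving_comp_equiv_pi _ (Equiv.addRight r))
      (Set.to_countable _).measurableSet (Set.to_countable _).measurableSet n₀
      (sum_indicator_rotate_walkStaysPositive_inter_totalsEq n₀ m₀ m)
  have key : μ (vec ⁻¹' (walkStaysPositive n₀ ∩ totalsEq n₀ m₀ n m)) =
      n₀ / n * μ (vec ⁻¹' totalsEq n₀ m₀ n m) := by
    rw [← Measure.map_apply_of_aemeasurable hvec (Set.to_countable _).measurableSet,
      ← Measure.map_apply_of_aemeasurable hvec (Set.to_countable _).measurableSet, hlaw,
      div_eq_mul_inv, mul_right_comm, ← div_eq_mul_inv,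
      ENNReal.eq_div_iff (by simp; omega) (by simp), hcount]
  convert key using 3 <;> ext ω
  · simp only [Set.mem_preimage, Set.mem_inter_iff, vec,
      mk_mem_walkStaysPositive_iff n₀ (fun j => (Y j ω, Z j ω)),
      mk_mem_totalsEq_iff (fun j => (Y j ω, Z j ω)), add_sum_sub_one_eq_zero_iff, Set.mem_ofPred_eq]
  · exact (mk_mem_totalsEq_iff (fun j => (Y j ω, Z j ω))).symm

/-- **Sesqui-type Otter–Dwass formula.** A two-type branching process starts with `n₀`
particles of type `L` and `m₀` of type `S`; each type-`L` particle independently has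
offspring distributed as `(Y, Z)` (type-`L` resp. type-`S` children), and type-`S`
particles are barren. Via the standard exploration (random-walk) representation with
i.i.d. copies `(Y_j, Z_j)` of `(Y, Z)`, the total number of type-`L` particles equals `n`
iff the walk `n₀ + ∑_{j<k}(Y_j − 1)` stays positive for `k < n` and hits `0` at `k = n`,
and then the total number of type-`S` particles is `m₀ + ∑_{j<n} Z_j`. The formula: for
`n ≥ 1`, `m ≥ 0`,
`P(|bp^L| = n, |bp^S| = m) = (n₀/n) · P(n₀ + ∑_{j≤n} Y_j = n, m₀ + ∑_{j≤n} Z_j = m)`. -/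
theorem otter_dwass_sesqui_type
    {Ω : Type*} [MeasurableSpace Ω] (μ : Measure Ω) [IsProbabilityMeasure μ]
    (Y Z : ℕ → Ω → ℕ) (hY : ∀ j, Measurable (Y j)) (hZ : ∀ j, Measurable (Z j))
    (hindep : iIndepFun (fun j ω => (Y j ω, Z j ω)) μ)
    (hident : ∀ j, IdentDistrib (fun ω => (Y j ω, Z j ω)) (fun ω => (Y 0 ω, Z 0 ω)) μ μ)
    (n₀ m₀ : ℕ) (n m : ℕ) (hn : 1 ≤ n) :
    μ {ω | (∀ k < n, 0 < (n₀ : ℤ) + ∑ j ∈ Finset.range k, ((Y j ω : ℤ) - 1)) ∧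
        (n₀ : ℤ) + ∑ j ∈ Finset.range n, ((Y j ω : ℤ) - 1) = 0 ∧
        m₀ + ∑ j ∈ Finset.range n, Z j ω = m}
      = (n₀ : ENNReal) / n *
        μ {ω | n₀ + ∑ j ∈ Finset.range n, Y j ω = n ∧
            m₀ + ∑ j ∈ Finset.range n, Z j ω = m} :=
  otter_dwass_sesqui_type_general μ Y Z hindep hident n₀ m₀ n m hn
end

section
/- Let (Y,Z) be an ℕ²-valued random variable with π_{k,l} := P(Y=k,Z=l), and suppose π_{k1,k2} ≥ δ, π_{k1+1,k2} ≥ δ, π_{k1,k2+1} ≥ δ for some k1,k2 ∈ ℕ and δ > 0. Then for the moment generating function f(y,z) = E[e^{yY+zZ}] evaluated at real α,β and real u,v with |u|,|v| ≤ π, one has f(α,β)² − |f(α+iu,β+iv)|² ≥ δ² e^{(2k1+1)α+2k2β}(1−cos u) + δ² e^{2k1α+(2k2+1)β}(1−cos v). -/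
open MeasureTheory Real

/-!
With `F ω = exp ((α + iu) Y ω + (β + iv) Z ω)` one has `f(α,β) = ∫ ‖F‖`, and expanding both
squares over two independent copies gives
`(∫ ‖F‖)² − ‖∫ F‖² = ∬ (‖F ω‖ ‖F ω'‖ − Re (F ω · conj (F ω')))`.
The integrand is the nonnegative Cauchy–Schwarz gap; for `F ω = e^z`, `F ω' = e^w` it equals
`e^{Re z + Re w} (1 − cos (Im z − Im w))`. Restricting the double integral to the two disjoint
product sets `{(k₁,k₂)} × {(k₁+1,k₂)}` and `{(k₁,k₂)} × {(k₁,k₂+1)}` (values of `(Y,Z)`), each of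
mass at least `δ²`, gives the two terms.
-/

section CauchySchwarzGap

variable {𝕜 : Type*} [RCLike 𝕜]

def cauchySchwarzGap (z w : 𝕜) : ℝ :=
  ‖z‖ * ‖w‖ - RCLike.re (z * starRingEnd 𝕜 w)

lemma cauchySchwarzGap_nonneg (z w : 𝕜) : 0 ≤ cauchySchwarzGap z w := by
  have := RCLike.re_le_norm (z * starRingEnd 𝕜 w)
  rw [norm_mul, RCLike.norm_conj] at this
  exact sub_nonneg.2 this

lemma cauchySchwarzGap_exp (z w : ℂ) :
    cauchySchwarzGap (Complex.exp z) (Complex.exp w)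
      = Real.exp (z.re + w.re) * (1 - Real.cos (z.im - w.im)) := by
  rw [cauchySchwarzGap, RCLike.re_to_complex, ← Complex.exp_conj, ← Complex.exp_add,
    Complex.exp_re, Complex.norm_exp, Complex.norm_exp]
  simp only [Complex.add_re, Complex.add_im, Complex.conj_re, Complex.conj_im, sub_eq_add_neg,
    Real.exp_add]
  ring

lemma cauchySchwarzGap_exp_natCast (α β u v : ℝ) (m n m' n' : ℕ) :
    cauchySchwarzGap (Complex.exp ((α + u * Complex.I) * m + (β + v * Complex.I) * n))
        (Complex.exp ((α + u * Complex.I) * m' + (β + v * Complex.I) * n'))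
      = Real.exp (α * (m + m') + β * (n + n')) * (1 - Real.cos (u * (m - m') + v * (n - n'))) := by
  rw [cauchySchwarzGap_exp]
  simp only [Complex.add_re, Complex.add_im, Complex.mul_re, Complex.mul_im, Complex.ofReal_re,
    Complex.ofReal_im, Complex.I_re, Complex.I_im, Complex.natCast_re, Complex.natCast_im]
  ring_nf

lemma cauchySchwarzGap_exp_succ_fst (α β u v : ℝ) (m n : ℕ) :
    cauchySchwarzGap (Complex.exp ((α + u * Complex.I) * m + (β + v * Complex.I) * n))
        (Complex.exp ((α + u * Complex.I) * (m + 1 : ℕ) + (β + v * Complex.I) * n))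
      = Real.exp ((2 * m + 1) * α + 2 * n * β) * (1 - Real.cos u) := by
  rw [cauchySchwarzGap_exp_natCast]
  push_cast
  rw [show u * (m - (m + 1)) + v * (n - n) = -u by ring, Real.cos_neg]
  ring_nf

lemma cauchySchwarzGap_exp_succ_snd (α β u v : ℝ) (m n : ℕ) :
    cauchySchwarzGap (Complex.exp ((α + u * Complex.I) * m + (β + v * Complex.I) * n))
        (Complex.exp ((α + u * Complex.I) * m + (β + v * Complex.I) * (n + 1 : ℕ)))
      = Real.exp (2 * m * α + (2 * n + 1) * β) * (1 - Real.cos v) := by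
  rw [cauchySchwarzGap_exp_natCast]
  push_cast
  rw [show u * (m - m) + v * (n - (n + 1)) = -v by ring, Real.cos_neg]
  ring_nf

variable {X : Type*} [MeasurableSpace X] {μ : Measure X} {F : X → 𝕜}

lemma MeasureTheory.Integrable.conj (hF : Integrable F μ) :
    Integrable (fun x => starRingEnd 𝕜 (F x)) μ :=
  RCLike.conjCLE.toContinuousLinearMap.integrable_comp hF

lemma MeasureTheory.Integrable.cauchySchwarzGap (hF : Integrable F μ) :
    Integrable (fun p : X × X => cauchySchwarzGap (F p.1) (F p.2)) (μ.prod μ) :=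
  (hF.norm.mul_prod hF.norm).sub (hF.mul_prod hF.conj).re

lemma sq_integral_norm_sub_sq_norm_integral [SFinite μ] (hF : Integrable F μ) :
    (∫ x, ‖F x‖ ∂μ) ^ 2 - ‖∫ x, F x ∂μ‖ ^ 2
      = ∫ p, cauchySchwarzGap (F p.1) (F p.2) ∂μ.prod μ := by
  have hnorm : (∫ x, ‖F x‖ ∂μ) ^ 2 = ∫ p, ‖F p.1‖ * ‖F p.2‖ ∂μ.prod μ := by
    rw [sq, integral_prod_mul (fun x => ‖F x‖) (fun x => ‖F x‖)]
  have hre : ‖∫ x, F x ∂μ‖ ^ 2 = ∫ p, RCLike.re (F p.1 * starRingEnd 𝕜 (F p.2)) ∂μ.prod μ := by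
    rw [integral_re (hF.mul_prod hF.conj),
      integral_prod_mul F (fun x => starRingEnd 𝕜 (F x)), integral_conj, RCLike.mul_conj]
    norm_cast
  rw [hnorm, hre, ← integral_sub (hF.norm.mul_prod hF.norm)
    (hF.mul_prod hF.conj).re]
  rfl

end CauchySchwarzGap

lemma mul_measureReal_add_mul_measureReal_le_integral {X : Type*} [MeasurableSpace X]
    {ν : Measure X} [IsFiniteMeasure ν] {H : X → ℝ} (hH : Integrable H ν)
    (hH₀ : ∀ x, 0 ≤ H x) {S T : Set X} (hS : MeasurableSet S) (hT : MeasurableSet T)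
    (hST : Disjoint S T) {a b : ℝ} (ha : ∀ x ∈ S, a ≤ H x) (hb : ∀ x ∈ T, b ≤ H x) :
    a * ν.real S + b * ν.real T ≤ ∫ x, H x ∂ν :=
  calc a * ν.real S + b * ν.real T
      ≤ (∫ x in S, H x ∂ν) + ∫ x in T, H x ∂ν :=
        add_le_add (setIntegral_ge_of_const_le_real hS (measure_ne_top _ _) ha hH.integrableOn)
          (setIntegral_ge_of_const_le_real hT (measure_ne_top _ _) hb hH.integrableOn)
    _ = ∫ x in S ∪ T, H x ∂ν := (setIntegral_union hST hT hH.integrableOn hH.integrableOn).symm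
    _ ≤ ∫ x, H x ∂ν := setIntegral_le_integral hH (Filter.Eventually.of_forall hH₀)

lemma mul_le_measureReal_prod {X Y : Type*} [MeasurableSpace X] [MeasurableSpace Y]
    {μ : Measure X} {ν : Measure Y} [IsFiniteMeasure μ] [IsFiniteMeasure ν]
    {s : Set X} {t : Set Y} {a b : ℝ} (ha : 0 ≤ a) (hs : ENNReal.ofReal a ≤ μ s)
    (hb : ENNReal.ofReal b ≤ ν t) : a * b ≤ (μ.prod ν).real (s ×ˢ t) := by
  rw [ENNReal.ofReal_le_iff_le_toReal (measure_ne_top _ _)] at hs hb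
  calc a * b ≤ a * ν.real t := mul_le_mul_of_nonneg_left hb ha
    _ ≤ μ.real s * ν.real t := mul_le_mul_of_nonneg_right hs measureReal_nonneg
    _ = (μ.prod ν).real (s ×ˢ t) := (measureReal_prod_prod s t).symm

theorem mgf_modulus_squared_drop_general
    {Ω : Type*} [MeasurableSpace Ω] (μ : Measure Ω) [IsProbabilityMeasure μ]
    (Y Z : Ω → ℕ) (hY : Measurable Y) (hZ : Measurable Z)
    (k₁ k₂ : ℕ) (δ : ℝ) (hδ : 0 < δ)
    (h1 : ENNReal.ofReal δ ≤ μ {ω | Y ω = k₁ ∧ Z ω = k₂})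
    (h2 : ENNReal.ofReal δ ≤ μ {ω | Y ω = k₁ + 1 ∧ Z ω = k₂})
    (h3 : ENNReal.ofReal δ ≤ μ {ω | Y ω = k₁ ∧ Z ω = k₂ + 1})
    (α β u v : ℝ)
    (hint : Integrable (fun ω => Real.exp (α * Y ω + β * Z ω)) μ) :
    δ ^ 2 * Real.exp ((2 * k₁ + 1) * α + 2 * k₂ * β) * (1 - Real.cos u)
      + δ ^ 2 * Real.exp (2 * k₁ * α + (2 * k₂ + 1) * β) * (1 - Real.cos v)
    ≤ (∫ ω, Real.exp (α * Y ω + β * Z ω) ∂μ) ^ 2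
      - ‖∫ ω, Complex.exp ((α + u * Complex.I) * (Y ω : ℂ)
          + (β + v * Complex.I) * (Z ω : ℂ)) ∂μ‖ ^ 2 := by
  set F : Ω → ℂ := fun ω => Complex.exp ((α + u * Complex.I) * (Y ω : ℂ)
    + (β + v * Complex.I) * (Z ω : ℂ))
  have hnormF : ∀ ω, ‖F ω‖ = Real.exp (α * Y ω + β * Z ω) := fun ω => by
    simp [F, Complex.norm_exp]
  have hF : Integrable F μ := (integrable_norm_iff (by fun_prop)).1 (by simpa only [hnormF])
  have hmeas : ∀ m n : ℕ, MeasurableSet {ω | Y ω = m ∧ Z ω = n} := fun m n =>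
    (hY (measurableSet_singleton m)).inter (hZ (measurableSet_singleton n))
  have hAB : ∀ p ∈ {ω | Y ω = k₁ ∧ Z ω = k₂} ×ˢ {ω | Y ω = k₁ + 1 ∧ Z ω = k₂},
      Real.exp ((2 * k₁ + 1) * α + 2 * k₂ * β) * (1 - Real.cos u)
        ≤ cauchySchwarzGap (F p.1) (F p.2) := fun p ⟨⟨hy₁, hz₁⟩, hy₂, hz₂⟩ => by
    simp only [F, hy₁, hz₁, hy₂, hz₂, cauchySchwarzGap_exp_succ_fst, le_refl]
  have hAC : ∀ p ∈ {ω | Y ω = k₁ ∧ Z ω = k₂} ×ˢ {ω | Y ω = k₁ ∧ Z ω = k₂ + 1},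
      Real.exp (2 * k₁ * α + (2 * k₂ + 1) * β) * (1 - Real.cos v)
        ≤ cauchySchwarzGap (F p.1) (F p.2) := fun p ⟨⟨hy₁, hz₁⟩, hy₂, hz₂⟩ => by
    simp only [F, hy₁, hz₁, hy₂, hz₂, cauchySchwarzGap_exp_succ_snd, le_refl]
  have hdisj : Disjoint {ω | Y ω = k₁ + 1 ∧ Z ω = k₂} {ω | Y ω = k₁ ∧ Z ω = k₂ + 1} :=
    Set.disjoint_left.2 fun ω ⟨hy, _⟩ ⟨hy', _⟩ => by omega
  have hbound := mul_measureReal_add_mul_measureReal_le_integral hF.cauchySchwarzGap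
    (fun p => cauchySchwarzGap_nonneg _ _) ((hmeas _ _).prod (hmeas _ _))
    ((hmeas _ _).prod (hmeas _ _)) (Set.disjoint_prod.2 (Or.inr hdisj)) hAB hAC
  have hAB_mass := mul_le_measureReal_prod (μ := μ) (ν := μ) hδ.le h1 h2
  have hAC_mass := mul_le_measureReal_prod (μ := μ) (ν := μ) hδ.le h1 h3
  have hcos_u : 0 ≤ 1 - Real.cos u := sub_nonneg.2 (Real.cos_le_one u)
  have hcos_v : 0 ≤ 1 - Real.cos v := sub_nonneg.2 (Real.cos_le_one v)
  simp only [← hnormF]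
  rw [sq_integral_norm_sub_sq_norm_integral hF]
  calc _ = Real.exp ((2 * k₁ + 1) * α + 2 * k₂ * β) * (1 - Real.cos u) * (δ * δ)
        + Real.exp (2 * k₁ * α + (2 * k₂ + 1) * β) * (1 - Real.cos v) * (δ * δ) := by ring
    _ ≤ _ := by gcongr
    _ ≤ _ := hbound

/-- If `(Y,Z)` is an `ℕ²`-valued random variable with point probabilities at least `δ`
at `(k₁,k₂)`, `(k₁+1,k₂)` and `(k₁,k₂+1)`, then the bivariate moment generating function
`f(y,z) = E[e^{yY+zZ}]` satisfies, for real `α, β` and `|u|,|v| ≤ π`,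
`f(α,β)² − |f(α+iu,β+iv)|² ≥ δ²e^{(2k₁+1)α+2k₂β}(1−cos u) + δ²e^{2k₁α+(2k₂+1)β}(1−cos v)`. -/
theorem mgf_modulus_squared_drop
    {Ω : Type*} [MeasurableSpace Ω] (μ : Measure Ω) [IsProbabilityMeasure μ]
    (Y Z : Ω → ℕ) (hY : Measurable Y) (hZ : Measurable Z)
    (k₁ k₂ : ℕ) (δ : ℝ) (hδ : 0 < δ)
    (h1 : ENNReal.ofReal δ ≤ μ {ω | Y ω = k₁ ∧ Z ω = k₂})
    (h2 : ENNReal.ofReal δ ≤ μ {ω | Y ω = k₁ + 1 ∧ Z ω = k₂})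
    (h3 : ENNReal.ofReal δ ≤ μ {ω | Y ω = k₁ ∧ Z ω = k₂ + 1})
    (α β u v : ℝ) (hu : |u| ≤ π) (hv : |v| ≤ π)
    (hint : Integrable (fun ω => Real.exp (α * Y ω + β * Z ω)) μ) :
    δ ^ 2 * Real.exp ((2 * k₁ + 1) * α + 2 * k₂ * β) * (1 - Real.cos u)
      + δ ^ 2 * Real.exp (2 * k₁ * α + (2 * k₂ + 1) * β) * (1 - Real.cos v)
    ≤ (∫ ω, Real.exp (α * Y ω + β * Z ω) ∂μ) ^ 2
      - ‖∫ ω, Complex.exp ((α + u * Complex.I) * (Y ω : ℂ)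
          + (β + v * Complex.I) * (Z ω : ℂ)) ∂μ‖ ^ 2 :=
  mgf_modulus_squared_drop_general μ Y Z hY hZ k₁ k₂ δ hδ h1 h2 h3 α β u v hint
end

section
/- Let φ : U → ℂ be analytic on an open set U ⊆ ℂ² containing a real point (α,β), with all derivatives D^m φ real at real points, and suppose Re φ(α+iu, β+iv) ≤ φ(α,β) − c(u²+v²) for all real u,v with |u|,|v| ≤ r (for constants c, r > 0). Then the Hessian D²φ(α,β) (a real symmetric 2×2 matrix) satisfies D²φ(α,β)[u,v] ≥ 2c(u²+v²) for all real u,v; in particular det(D²φ(α,β)) ≥ 4c². -/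
/-!
Along an imaginary direction `t ↦ z₀ + t • I • w` the real function `t ↦ Re φ + c‖w‖² t²` has a
local maximum at `t = 0`, so by the second-derivative test its second derivative there,
`Re D²φ[I w, I w] + 2c‖w‖²`, is nonpositive. Complex bilinearity turns `D²φ[I w, I w]` into
`-D²φ[w, w]`, which gives the lower bound on the Hessian form; the determinant bound is the
nonpositivity of the discriminant of the positive semidefinite form `D²φ - 2c·id`.
-/

open Complex Filter Topology

theorem IsLocalMax.deriv_deriv_nonpos {f : ℝ → ℝ} {x : ℝ} (hmax : IsLocalMax f x)
    (hc : ContinuousAt f x) : deriv (deriv f) x ≤ 0 := by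
  by_contra! hpos
  -- `x` would also be a local minimum, so `f` is locally constant and `deriv (deriv f) x = 0`.
  have hconst : f =ᶠ[𝓝 x] fun _ => f x :=
    ((isLocalMin_of_deriv_deriv_pos hpos hmax.deriv_eq_zero hc).and hmax).mono
      fun y hy => le_antisymm hy.2 hy.1
  have hderiv : deriv f =ᶠ[𝓝 x] fun _ => 0 :=
    hconst.eventuallyEq_nhds.mono fun y hy => by rw [hy.deriv_eq, deriv_const]
  simp [hderiv.deriv_eq] at hpos

theorem IsLocalMax.le_zero_of_hasDerivAt_of_hasDerivAt {f f' : ℝ → ℝ} {x q : ℝ}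
    (hmax : IsLocalMax f x) (hf : ∀ᶠ y in 𝓝 x, HasDerivAt f (f' y) y) (hf' : HasDerivAt f' q x) :
    q ≤ 0 := by
  have hderiv : deriv f =ᶠ[𝓝 x] f' := hf.mono fun y hy => hy.deriv
  simpa [hderiv.deriv_eq, hf'.deriv] using
    hmax.deriv_deriv_nonpos hf.self_of_nhds.continuousAt

theorem re_iteratedFDeriv_two_le_of_re_le_sub_sq {E : Type*} [NormedAddCommGroup E]
    [NormedSpace ℂ E] {F : E → ℂ} {z w : E} {K : ℝ} (hF : ContDiffAt ℂ 2 F z)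
    (hle : ∀ᶠ t : ℝ in 𝓝 0, (F (z + t • w)).re ≤ (F z).re - K * t ^ 2) :
    (iteratedFDeriv ℂ 2 F z (fun _ => w)).re ≤ -2 * K := by
  set γ : ℝ → E := fun t => z + t • w
  have hγ : ∀ t, HasDerivAt γ w t := fun t => by
    simpa only [one_smul] using ((hasDerivAt_id' t).smul_const w).const_add z
  have hγ0 : γ 0 = z := by simp [γ]
  have hF1 : ∀ᶠ t in 𝓝 (0 : ℝ), DifferentiableAt ℂ F (γ t) := by
    have hnear := (hF.eventually (by simp)).mono fun y hy => hy.differentiableAt (by norm_num)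
    exact (hγ 0).continuousAt.tendsto.eventually (hγ0 ▸ hnear)
  have hF2 : DifferentiableAt ℂ (fderiv ℂ F) (γ 0) :=
    hγ0 ▸ (hF.fderiv_right (m := 1) (by norm_num)).differentiableAt one_ne_zero
  have hfirst : ∀ᶠ t in 𝓝 (0 : ℝ), HasDerivAt (fun t => (F (γ t)).re + K * t ^ 2)
      ((fderiv ℂ F (γ t) w).re + K * (2 * t)) t := hF1.mono fun t ht =>
    ((reCLM.hasFDerivAt.comp_hasDerivAt t
      ((ht.hasFDerivAt.restrictScalars ℝ).comp_hasDerivAt t (hγ t))).add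
      (by simpa using (hasDerivAt_pow 2 t).const_mul K))
  have hsecond : HasDerivAt (fun t => (fderiv ℂ F (γ t) w).re + K * (2 * t))
      ((fderiv ℂ (fderiv ℂ F) z w w).re + K * 2) 0 := by
    have hre : HasDerivAt (fun t => (fderiv ℂ F (γ t) w).re)
        ((fderiv ℂ (fderiv ℂ F) (γ 0) w w).re) 0 :=
      (reCLM.comp ((ContinuousLinearMap.apply ℂ ℂ w).restrictScalars ℝ)).hasFDerivAt.comp_hasDerivAt
        0 ((hF2.hasFDerivAt.restrictScalars ℝ).comp_hasDerivAt 0 (hγ 0))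
    rw [hγ0] at hre
    exact hre.add (by simpa using ((hasDerivAt_id (0 : ℝ)).const_mul 2).const_mul K)
  have hmax : IsLocalMax (fun t => (F (γ t)).re + K * t ^ 2) 0 :=
    hle.mono fun t ht => by simp only [hγ0, γ]; linarith
  have hnonpos := hmax.le_zero_of_hasDerivAt_of_hasDerivAt hfirst hsecond
  rw [iteratedFDeriv_two_apply]
  linarith

theorem iteratedFDeriv_two_apply_prod_mk {𝕜 F : Type*} [RCLike 𝕜] [NormedAddCommGroup F]
    [NormedSpace 𝕜 F] {f : 𝕜 × 𝕜 → F} {z : 𝕜 × 𝕜} (hf : ContDiffAt 𝕜 2 f z) (u v : 𝕜) :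
    iteratedFDeriv 𝕜 2 f z (fun _ => (u, v)) =
      u ^ 2 • iteratedFDeriv 𝕜 2 f z (fun _ => (1, 0)) +
        (2 * u * v) • iteratedFDeriv 𝕜 2 f z ![(1, 0), (0, 1)] +
        v ^ 2 • iteratedFDeriv 𝕜 2 f z (fun _ => (0, 1)) := by
  have hsymm := hf.isSymmSndFDerivAt (by simp)
  have hsplit : ((u, v) : 𝕜 × 𝕜) = u • (1, 0) + v • (0, 1) := by simp
  simp only [iteratedFDeriv_two_apply, Matrix.cons_val_zero, Matrix.cons_val_one]
  rw [hsplit]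
  simp only [map_add, map_smul, add_apply, smul_apply, hsymm (0, 1) (1, 0)]
  module

theorem sq_le_mul_sub_of_quadratic_form_ge {a b d c : ℝ} (hc : 0 ≤ c)
    (h : ∀ u v : ℝ, 2 * c * (u ^ 2 + v ^ 2) ≤ u ^ 2 * a + 2 * u * v * b + v ^ 2 * d) :
    4 * c ^ 2 ≤ a * d - b ^ 2 := by
  have ha : 2 * c ≤ a := by simpa using h 1 0
  have hd : 2 * c ≤ d := by simpa using h 0 1
  have hdisc : discrim (a - 2 * c) (2 * b) (d - 2 * c) ≤ 0 :=
    discrim_le_zero fun t => by nlinarith [h t 1]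
  rw [discrim] at hdisc
  nlinarith [mul_nonneg hc (sub_nonneg.2 ha), mul_nonneg hc (sub_nonneg.2 hd)]

theorem iteratedFDeriv_two_I_smul {E F : Type*} [NormedAddCommGroup E] [NormedSpace ℂ E]
    [NormedAddCommGroup F] [NormedSpace ℂ F] (f : E → F) (z w : E) :
    iteratedFDeriv ℂ 2 f z (fun _ => I • w) = -iteratedFDeriv ℂ 2 f z (fun _ => w) := by
  rw [(iteratedFDeriv ℂ 2 f z).map_smul_univ (fun _ => I) (fun _ => w)]
  simp

theorem two_mul_sq_le_re_iteratedFDeriv_two {φ : ℂ × ℂ → ℂ} {α β c r : ℝ}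
    (hφ : ContDiffAt ℂ 2 φ ((α : ℂ), (β : ℂ))) (hr : 0 < r)
    (hdrop : ∀ u v : ℝ, |u| ≤ r → |v| ≤ r →
      (φ ((α : ℂ) + u * I, (β : ℂ) + v * I)).re ≤ (φ ((α : ℂ), (β : ℂ))).re - c * (u ^ 2 + v ^ 2))
    (u v : ℝ) :
    2 * c * (u ^ 2 + v ^ 2) ≤
      (iteratedFDeriv ℂ 2 φ ((α : ℂ), (β : ℂ)) (fun _ => ((u : ℂ), (v : ℂ)))).re := by
  have hsmall (x : ℝ) : ∀ᶠ t : ℝ in 𝓝 0, |t * x| ≤ r :=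
    ((by fun_prop : Continuous fun t : ℝ => |t * x|).continuousAt.eventually_lt
      continuousAt_const (by simpa using hr)).mono fun _ => le_of_lt
  have hline : ∀ᶠ t : ℝ in 𝓝 0, (φ (((α : ℂ), (β : ℂ)) + t • I • ((u : ℂ), (v : ℂ)))).re ≤
      (φ ((α : ℂ), (β : ℂ))).re - c * (u ^ 2 + v ^ 2) * t ^ 2 := by
    filter_upwards [hsmall u, hsmall v] with t hu hv
    have hpt : ((α : ℂ), (β : ℂ)) + t • I • ((u : ℂ), (v : ℂ)) =
        ((α : ℂ) + ↑(t * u) * I, (β : ℂ) + ↑(t * v) * I) := by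
      ext <;> simp only [Prod.smul_mk, smul_eq_mul, real_smul, Prod.mk_add_mk, ofReal_mul,
        add_right_inj] <;> ring
    rw [hpt]
    exact (hdrop _ _ hu hv).trans_eq (by ring)
  have hsecond := re_iteratedFDeriv_two_le_of_re_le_sub_sq hφ hline
  rw [iteratedFDeriv_two_I_smul, neg_re] at hsecond
  linarith

theorem hessian_posdef_of_modulus_drop_general
    (U : Set (ℂ × ℂ)) (φ : ℂ × ℂ → ℂ)
    (hφ : AnalyticOnNhd ℂ φ U)
    (α β : ℝ) (hmem : ((α : ℂ), (β : ℂ)) ∈ U)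
    (c r : ℝ) (hc : 0 < c) (hr : 0 < r)
    (hdrop : ∀ u v : ℝ, |u| ≤ r → |v| ≤ r →
      (φ ((α : ℂ) + u * Complex.I, (β : ℂ) + v * Complex.I)).re
        ≤ (φ ((α : ℂ), (β : ℂ))).re - c * (u ^ 2 + v ^ 2)) :
    (∀ u v : ℝ,
      2 * c * (u ^ 2 + v ^ 2) ≤
        (iteratedFDeriv ℂ 2 φ ((α : ℂ), (β : ℂ)) (fun _ => ((u : ℂ), (v : ℂ)))).re) ∧
    4 * c ^ 2 ≤
      (iteratedFDeriv ℂ 2 φ ((α : ℂ), (β : ℂ)) (fun _ => ((1 : ℂ), (0 : ℂ)))).re *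
        (iteratedFDeriv ℂ 2 φ ((α : ℂ), (β : ℂ)) (fun _ => ((0 : ℂ), (1 : ℂ)))).re -
      (iteratedFDeriv ℂ 2 φ ((α : ℂ), (β : ℂ)) ![((1 : ℂ), (0 : ℂ)), ((0 : ℂ), (1 : ℂ))]).re
        ^ 2 := by
  have hφ2 : ContDiffAt ℂ 2 φ ((α : ℂ), (β : ℂ)) := (hφ _ hmem).contDiffAt
  have hquad := two_mul_sq_le_re_iteratedFDeriv_two hφ2 hr hdrop
  refine ⟨hquad, sq_le_mul_sub_of_quadratic_form_ge hc.le fun u v => ?_⟩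
  have h := hquad u v
  rw [iteratedFDeriv_two_apply_prod_mk hφ2] at h
  simpa only [smul_eq_mul, add_re, ← ofReal_pow, ← ofReal_ofNat, ← ofReal_mul, re_ofReal_mul]
    using h

/-- If `φ` is analytic on an open set `U ⊆ ℂ²` containing a real point `(α,β)`, all its
derivatives are real at real points, and
`Re φ(α+iu, β+iv) ≤ φ(α,β) − c(u²+v²)` for `|u|,|v| ≤ r`, then the (real) Hessian
quadratic form at `(α,β)` satisfies `D²φ(α,β)[u,v] ≥ 2c(u²+v²)`, and its determinant is
at least `4c²`. -/
theorem hessian_posdef_of_modulus_drop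
    (U : Set (ℂ × ℂ)) (hU : IsOpen U) (φ : ℂ × ℂ → ℂ)
    (hφ : AnalyticOnNhd ℂ φ U)
    (α β : ℝ) (hmem : ((α : ℂ), (β : ℂ)) ∈ U)
    (hreal : ∀ (m : ℕ) (a b : ℝ), ((a : ℂ), (b : ℂ)) ∈ U →
      ∀ w : Fin m → ℝ × ℝ,
        (iteratedFDeriv ℂ m φ ((a : ℂ), (b : ℂ))
          (fun i => (((w i).1 : ℂ), ((w i).2 : ℂ)))).im = 0)
    (c r : ℝ) (hc : 0 < c) (hr : 0 < r)
    (hdrop : ∀ u v : ℝ, |u| ≤ r → |v| ≤ r →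
      (φ ((α : ℂ) + u * Complex.I, (β : ℂ) + v * Complex.I)).re
        ≤ (φ ((α : ℂ), (β : ℂ))).re - c * (u ^ 2 + v ^ 2)) :
    (∀ u v : ℝ,
      2 * c * (u ^ 2 + v ^ 2) ≤
        (iteratedFDeriv ℂ 2 φ ((α : ℂ), (β : ℂ)) (fun _ => ((u : ℂ), (v : ℂ)))).re) ∧
    4 * c ^ 2 ≤
      (iteratedFDeriv ℂ 2 φ ((α : ℂ), (β : ℂ)) (fun _ => ((1 : ℂ), (0 : ℂ)))).re *
        (iteratedFDeriv ℂ 2 φ ((α : ℂ), (β : ℂ)) (fun _ => ((0 : ℂ), (1 : ℂ)))).re -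
      (iteratedFDeriv ℂ 2 φ ((α : ℂ), (β : ℂ)) ![((1 : ℂ), (0 : ℂ)), ((0 : ℂ), (1 : ℂ))]).re
        ^ 2 :=
  hessian_posdef_of_modulus_drop_general U φ hφ α β hmem c r hc hr hdrop
end

section
/- For a > 0 and y ∈ ℝ, the sum S₁(a,y) := Σ_{n∈ℤ} (n−y)·e^{−a(n−y)²} satisfies |S₁(a,y)| ≤ C·a^{−3/2}·e^{−π²/a} for 0 < a ≤ 1, where C is an absolute constant. -/
/-!
The sum is the odd Hurwitz kernel `oddKernel (-y) (a/π)`. Its functional equation (Poisson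
summation) turns it into `(a/π)^{-3/2} · sinKernel (-y) (π/a)`, and for `t ≥ 1` the series
`sinKernel b t = Σ_{n≥1} 2n sin(2πbn) e^{-πn²t}` is bounded by `8 e^{-πt}`, its tail being
dominated by a geometric-type series in `e^{-πt} ≤ 1/2`.
-/

open Real HurwitzZeta HurwitzKernelBounds

lemma exp_neg_pi_mul_le_half {t : ℝ} (ht : 1 ≤ t) : rexp (-π * t) ≤ 1 / 2 := by
  calc rexp (-π * t) ≤ rexp (-1) := exp_le_exp.mpr (by nlinarith [pi_gt_three])
    _ ≤ 1 / 2 := by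
      rw [exp_neg, inv_le_comm₀ (exp_pos 1) (by norm_num)]
      linarith [add_one_le_exp 1]

lemma F_nat_one_zero_le {t : ℝ} (ht : 1 ≤ t) : F_nat 1 0 t ≤ 4 * rexp (-π * t) := by
  have hhalf : (1 : ℝ) / 2 ≤ 1 - rexp (-π * t) := by linarith [exp_neg_pi_mul_le_half ht]
  calc F_nat 1 0 t ≤ ‖F_nat 1 0 t‖ := le_abs_self _
    _ ≤ rexp (-π * t) / (1 - rexp (-π * t)) ^ 2 := by
      simpa using F_nat_one_le le_rfl (by linarith : 0 < t)
    _ ≤ rexp (-π * t) / (1 / 2) ^ 2 := by gcongr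
    _ = 4 * rexp (-π * t) := by ring

lemma abs_sinKernel_le_two_mul_F_nat (a : UnitAddCircle) {t : ℝ} (ht : 0 < t) :
    |sinKernel a t| ≤ 2 * F_nat 1 0 t := by
  induction a using QuotientAddGroup.induction_on with | H a =>
  rw [← (hasSum_nat_sinKernel a ht).tsum_eq, ← Real.norm_eq_abs, F_nat]
  refine tsum_of_norm_bounded ((summable_f_nat 1 0 ht).hasSum.mul_left 2) fun n ↦ ?_
  rw [f_nat, pow_one, add_zero, norm_mul, norm_mul, norm_mul, norm_two, Real.norm_natCast,
    norm_of_nonneg (exp_pos _).le, Real.norm_eq_abs]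
  calc 2 * n * |sin (2 * π * a * n)| * rexp (-π * n ^ 2 * t)
      ≤ 2 * n * 1 * rexp (-π * n ^ 2 * t) := by gcongr; exact abs_sin_le_one _
    _ = 2 * (n * rexp (-π * n ^ 2 * t)) := by ring

lemma abs_sinKernel_le (a : UnitAddCircle) {t : ℝ} (ht : 1 ≤ t) :
    |sinKernel a t| ≤ 8 * rexp (-π * t) := by
  linarith [abs_sinKernel_le_two_mul_F_nat a (by linarith : 0 < t), F_nat_one_zero_le ht]

lemma abs_oddKernel_le (a : UnitAddCircle) {x : ℝ} (hx : 0 < x) (hx1 : x ≤ 1) :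
    |oddKernel a x| ≤ 8 * x ^ (-(3 : ℝ) / 2) * rexp (-π / x) := by
  have hpow : 1 / x ^ (3 / 2 : ℝ) = x ^ (-(3 : ℝ) / 2) := by
    rw [one_div, ← rpow_neg hx.le]; norm_num
  rw [oddKernel_functional_equation, hpow, abs_mul, abs_of_pos (by positivity)]
  calc x ^ (-(3 : ℝ) / 2) * |sinKernel a (1 / x)|
      ≤ x ^ (-(3 : ℝ) / 2) * (8 * rexp (-π * (1 / x))) := by
        gcongr; exact abs_sinKernel_le a (one_le_one_div hx hx1)
    _ = 8 * x ^ (-(3 : ℝ) / 2) * rexp (-π / x) := by ring_nf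

lemma hasSum_int_sub_mul_exp_neg_mul_sq (y : ℝ) {a : ℝ} (ha : 0 < a) :
    HasSum (fun n : ℤ ↦ ((n : ℝ) - y) * rexp (-a * ((n : ℝ) - y) ^ 2))
      (oddKernel ↑(-y) (a / π)) := by
  convert hasSum_int_oddKernel (-y) (div_pos ha pi_pos) using 1
  ext n
  rw [← sub_eq_add_neg]
  field_simp

/-- The odd Gaussian sum `S₁(a,y) = Σ_{n∈ℤ} (n−y) e^{−a(n−y)²}` is exponentially small:
`|S₁(a,y)| ≤ C a^{−3/2} e^{−π²/a}` for `0 < a ≤ 1`, with an absolute constant `C`. -/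
theorem gaussian_odd_sum_small :
    ∃ C > 0, ∀ a y : ℝ, 0 < a → a ≤ 1 →
      |∑' n : ℤ, ((n : ℝ) - y) * Real.exp (-a * ((n : ℝ) - y) ^ 2)|
        ≤ C * a ^ (-(3 : ℝ) / 2) * Real.exp (-π ^ 2 / a) := by
  refine ⟨8 * π ^ (3 / 2 : ℝ), by positivity, fun a y ha ha1 ↦ ?_⟩
  have hx1 : a / π ≤ 1 := (div_le_one pi_pos).mpr (by linarith [pi_gt_three])
  rw [(hasSum_int_sub_mul_exp_neg_mul_sq y ha).tsum_eq]
  refine (abs_oddKernel_le _ (div_pos ha pi_pos) hx1).trans_eq ?_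
  rw [div_rpow ha.le pi_pos.le, neg_div, rpow_neg pi_pos.le, div_div_eq_mul_div, neg_mul,
    ← sq, div_inv_eq_mul]
  ring
end

section
/- Let (Y,Z) be an ℕ²-valued random variable with E[R^{Y+Z}] ≤ M (R > 1), and suppose a branching process starts according to (Y⁰,Z⁰) with E[R^{Y⁰+Z⁰}] ≤ M, type-L particles reproducing with offspring (Y,Z), type-S particles barren. Let x₀ = 1/(1+E Z) and fix c₀ > 0. Then there exist constants C, c > 0 (depending on R, M, E Z, c₀) such that for all 0 ≤ n ≤ N with |n/N − x₀| ≥ c₀, the probability p_{n,N−n} that the process has exactly n type-L and N−n type-S particles satisfies p_{n,N−n} ≤ C·e^{−cN}. -/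
/-!
Only the number of type-`S` particles matters: on the event, `Z⁰ + ∑_{j<n} Z_j = N - n`, a sum
with mean about `n ζ`, whereas `|n/N - x₀| ≥ c₀` forces `|N - n - n ζ| ≥ c₀ N`. The exponential
moment gives the quadratic bound `E e^{tZ} ≤ exp (ζ t + K t²)` for `|t| ≤ log R / 2`, so a
Chernoff bound with `|t|` a fixed multiple of `c₀` (capped at `log R / 2`) yields `e^{-cN}`.
-/

open MeasureTheory ProbabilityTheory Finset Real

lemma exp_le_one_add_add_sq_mul_exp_abs (y : ℝ) : exp y ≤ 1 + y + y ^ 2 * exp |y| := by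
  have hinv : exp y * exp (-y) = 1 := by rw [← exp_add, add_neg_cancel, exp_zero]
  rcases le_total 0 y with hy | hy
  · rw [abs_of_nonneg hy]
    nlinarith [mul_le_mul_of_nonneg_left (add_one_le_exp (-y)) (exp_pos y).le, exp_pos y]
  · rw [abs_of_nonpos hy]
    have hsq : y ^ 2 ≤ y ^ 2 * exp (-y) :=
      le_mul_of_one_le_right (sq_nonneg y) (one_le_exp (neg_nonneg.2 hy))
    nlinarith [mul_le_mul_of_nonneg_left (add_one_le_exp (-y)) (exp_pos y).le,
      mul_nonneg (mul_nonneg (neg_nonneg.2 hy) (neg_nonneg.2 hy)) (neg_nonneg.2 hy)]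

lemma exp_mul_le_one_add_mul_add_sq_mul_exp {b t x : ℝ} (hb : 0 < b) (ht : |t| ≤ b / 2)
    (hx : 0 ≤ x) : exp (t * x) ≤ 1 + t * x + 8 * t ^ 2 / b ^ 2 * exp (b * x) := by
  have hsq : x ^ 2 ≤ 8 / b ^ 2 * exp (b / 2 * x) := by
    have := Real.pow_div_factorial_le_exp (b / 2 * x) (by positivity) 2
    rw [div_mul_eq_mul_div, le_div_iff₀ (by positivity)]
    norm_num [Nat.factorial] at this
    nlinarith
  have habs : exp |t * x| ≤ exp (b / 2 * x) := by
    rw [abs_mul, abs_of_nonneg hx]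
    gcongr
  calc exp (t * x) ≤ 1 + t * x + (t * x) ^ 2 * exp |t * x| := exp_le_one_add_add_sq_mul_exp_abs _
    _ ≤ 1 + t * x + t ^ 2 * (8 / b ^ 2 * exp (b / 2 * x)) * exp (b / 2 * x) := by
        rw [mul_pow]; gcongr
    _ = 1 + t * x + 8 * t ^ 2 / b ^ 2 * exp (b * x) := by
        rw [mul_assoc, mul_assoc, ← exp_add]; ring_nf

lemma mul_le_abs_sub_sub_mul_of_le_abs_div_sub {c₀ ζ n N : ℝ} (hc₀ : 0 ≤ c₀) (hζ : 0 ≤ ζ)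
    (hN : 0 < N) (h : c₀ ≤ |n / N - 1 / (1 + ζ)|) : c₀ * N ≤ |N - n - n * ζ| := by
  have hscale : N - n - n * ζ = -(N * (1 + ζ) * (n / N - 1 / (1 + ζ))) := by
    field_simp; ring
  rw [hscale, abs_neg, abs_mul, abs_of_pos (by positivity : 0 < N * (1 + ζ))]
  nlinarith [mul_le_mul_of_nonneg_left h (by positivity : 0 ≤ N * (1 + ζ)), mul_nonneg hN.le hζ]

lemma exists_abs_eq_mul_sq_sub_mul_le {K τ c₀ n N D : ℝ} (hτ : 0 ≤ τ) (hKτ : K * τ ≤ c₀ / 2)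
    (hn : 0 ≤ n) (hnN : n ≤ N) (hc₀ : 0 ≤ c₀) (hD : c₀ * N ≤ |D|) :
    ∃ t, |t| = τ ∧ n * K * t ^ 2 - t * D ≤ -(c₀ * τ / 2) * N := by
  have hquad : n * K * τ ^ 2 ≤ |D| * τ / 2 := by
    nlinarith [mul_le_mul_of_nonneg_left hKτ (mul_nonneg hn hτ), mul_le_mul_of_nonneg_left hnN hc₀,
      mul_le_mul_of_nonneg_right hD hτ]
  rcases le_total 0 D with hD₀ | hD₀
  · refine ⟨τ, abs_of_nonneg hτ, ?_⟩
    rw [abs_of_nonneg hD₀] at hD hquad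
    nlinarith [mul_le_mul_of_nonneg_right hD hτ]
  · refine ⟨-τ, by rw [abs_neg, abs_of_nonneg hτ], ?_⟩
    rw [abs_of_nonpos hD₀] at hD hquad
    nlinarith [mul_le_mul_of_nonneg_right hD hτ]

section

variable {Ω : Type*} [MeasurableSpace Ω] {μ : Measure Ω}

lemma mgf_le_exp_of_mgf_le [IsProbabilityMeasure μ] {X : Ω → ℝ} (hX : ∀ ω, 0 ≤ X ω)
    (hXm : AEMeasurable X μ) {b t M : ℝ} (hb : 0 < b) (ht : |t| ≤ b / 2)
    (hint : Integrable (fun ω => exp (b * X ω)) μ) (hM : mgf X μ b ≤ M) :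
    mgf X μ t ≤ exp (μ[X] * t + 8 * M / b ^ 2 * t ^ 2) := by
  have hXint : Integrable X μ := by
    refine (hint.div_const b).mono' hXm.aestronglyMeasurable (ae_of_all _ fun ω => ?_)
    rw [norm_of_nonneg (hX ω), le_div_iff₀ hb, mul_comm]
    linarith [add_one_le_exp (b * X ω)]
  have hint_t : Integrable (fun ω => exp (t * X ω)) μ := by
    refine hint.mono' (hXm.const_mul t).exp.aestronglyMeasurable (ae_of_all _ fun ω => ?_)
    rw [norm_of_nonneg (exp_pos _).le]
    gcongr
    · exact hX ω
    · linarith [le_abs_self t]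
  calc mgf X μ t ≤ ∫ ω, (1 + t * X ω + 8 * t ^ 2 / b ^ 2 * exp (b * X ω)) ∂μ :=
        integral_mono hint_t (((integrable_const 1).add (hXint.const_mul t)).add
          (hint.const_mul _)) fun ω => exp_mul_le_one_add_mul_add_sq_mul_exp hb ht (hX ω)
    _ = 1 + (μ[X] * t + 8 * t ^ 2 / b ^ 2 * mgf X μ b) := by
        rw [integral_add (f := fun ω => 1 + t * X ω)
            ((integrable_const 1).add (hXint.const_mul t)) (hint.const_mul _),
          integral_add (integrable_const 1) (hXint.const_mul t), integral_const_mul,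
          integral_const_mul, mgf]
        simp only [integral_const, probReal_univ, smul_eq_mul, mul_one]; ring
    _ ≤ 1 + (μ[X] * t + 8 * M / b ^ 2 * t ^ 2) := by
        have : 8 * t ^ 2 / b ^ 2 * mgf X μ b ≤ 8 * t ^ 2 / b ^ 2 * M := by gcongr
        linarith [show 8 * t ^ 2 / b ^ 2 * M = 8 * M / b ^ 2 * t ^ 2 by ring]
    _ ≤ _ := by linarith [add_one_le_exp (μ[X] * t + 8 * M / b ^ 2 * t ^ 2)]

lemma measure_eq_le_exp_mul_mgf [IsFiniteMeasure μ] {X : Ω → ℝ} {t : ℝ} (m : ℝ)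
    (hint : Integrable (fun ω => exp (t * X ω)) μ) :
    μ.real {ω | X ω = m} ≤ exp (-t * m) * mgf X μ t := by
  rcases le_total 0 t with ht | ht
  · exact (measureReal_mono fun ω hω => hω.ge).trans (measure_ge_le_exp_mul_mgf m ht hint)
  · exact (measureReal_mono fun ω hω => hω.le).trans (measure_le_le_exp_mul_mgf m ht hint)

lemma measure_add_sum_eq_le [IsFiniteMeasure μ] {X : Option ℕ → Ω → ℝ} {t : ℝ}
    (hmeas : ∀ i, Measurable (X i)) (hind : iIndepFun X μ)
    (hident : ∀ j, IdentDistrib (X (some j)) (X (some 0)) μ μ)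
    (hint₀ : Integrable (fun ω => exp (t * X none ω)) μ)
    (hint : Integrable (fun ω => exp (t * X (some 0) ω)) μ) (n : ℕ) (m : ℝ) :
    μ.real {ω | X none ω + ∑ j ∈ range n, X (some j) ω = m}
      ≤ exp (-t * m) * (mgf (X none) μ t * mgf (X (some 0)) μ t ^ n) := by
  have hint_some (j : ℕ) : Integrable (fun ω => exp (t * X (some j) ω)) μ :=
    ((hident j).comp (measurable_const_mul t).exp).integrable_iff.mpr hint
  have hsum : (fun ω => X none ω + ∑ j ∈ range n, X (some j) ω)
      = ∑ i ∈ insertNone (range n), X i := by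
    ext ω; simp [sum_insertNone]
  have hsum_int : Integrable (fun ω => exp (t * (∑ i ∈ insertNone (range n), X i) ω)) μ :=
    hind.integrable_exp_mul_sum hmeas fun i _ => by cases i with
      | none => exact hint₀
      | some j => exact hint_some j
  have hmgf : mgf (∑ i ∈ insertNone (range n), X i) μ t
      = mgf (X none) μ t * mgf (X (some 0)) μ t ^ n := by
    rw [hind.mgf_sum hmeas, prod_insertNone,
      prod_congr rfl fun j _ => mgf_congr_of_identDistrib _ _ (hident j) t, prod_const,
      card_range]
  have := measure_eq_le_exp_mul_mgf m hsum_int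
  rwa [hmgf, ← hsum] at this

lemma exp_mul_le_pow_add {R t : ℝ} (hR : 1 ≤ R) (ht : t ≤ log R) (y z : ℕ) :
    exp (t * z) ≤ R ^ (y + z) :=
  calc exp (t * z) ≤ exp (z * log R) := by rw [mul_comm]; gcongr
    _ = R ^ z := by rw [exp_nat_mul, exp_log (by linarith)]
    _ ≤ R ^ (y + z) := pow_le_pow_right₀ hR (Nat.le_add_left z y)

lemma integrable_exp_mul_of_integrable_pow_add {R t : ℝ} (hR : 1 ≤ R) (ht : t ≤ log R)
    {Y Z : Ω → ℕ} (hZ : Measurable Z) (h : Integrable (fun ω => R ^ (Y ω + Z ω)) μ) :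
    Integrable (fun ω => exp (t * Z ω)) μ :=
  h.mono' (by fun_prop) (ae_of_all _ fun _ => by
    rw [norm_of_nonneg (exp_pos _).le]; exact exp_mul_le_pow_add hR ht _ _)

lemma mgf_le_integral_pow_add {R t : ℝ} (hR : 1 ≤ R) (ht : t ≤ log R)
    {Y Z : Ω → ℕ} (hZ : Measurable Z) (h : Integrable (fun ω => R ^ (Y ω + Z ω)) μ) :
    mgf (fun ω => (Z ω : ℝ)) μ t ≤ ∫ ω, R ^ (Y ω + Z ω) ∂μ :=
  integral_mono (integrable_exp_mul_of_integrable_pow_add hR ht hZ h) h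
    fun _ => exp_mul_le_pow_add hR ht _ _

lemma measure_add_sum_eq_le_of_exp_moment [IsProbabilityMeasure μ] {R M ζ t : ℝ} (hR : 1 < R)
    {Y Z : ℕ → Ω → ℕ} {Y₀ Z₀ : Ω → ℕ} (hZ : ∀ j, Measurable (Z j)) (hZ₀ : Measurable Z₀)
    (hindep : iIndepFun
      (fun (i : Option ℕ) ω => i.elim (Y₀ ω, Z₀ ω) (fun j => (Y j ω, Z j ω))) μ)
    (hident : ∀ j, IdentDistrib (fun ω => (Y j ω, Z j ω)) (fun ω => (Y 0 ω, Z 0 ω)) μ μ)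
    (hint : Integrable (fun ω => R ^ (Y 0 ω + Z 0 ω)) μ)
    (hintM : ∫ ω, R ^ (Y 0 ω + Z 0 ω) ∂μ ≤ M)
    (hint₀ : Integrable (fun ω => R ^ (Y₀ ω + Z₀ ω)) μ)
    (hint₀M : ∫ ω, R ^ (Y₀ ω + Z₀ ω) ∂μ ≤ M)
    (hζ : ∫ ω, (Z 0 ω : ℝ) ∂μ = ζ) (ht : |t| ≤ log R / 2) (n m : ℕ) :
    μ.real {ω | Z₀ ω + ∑ j ∈ range n, Z j ω = m}
      ≤ M * exp (n * (ζ * t + 8 * M / log R ^ 2 * t ^ 2) - t * m) := by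
  have hR₁ : 1 ≤ R := hR.le
  have hlogR : 0 < log R := log_pos hR
  have ht_le : t ≤ log R := by linarith [le_abs_self t]
  set X : Option ℕ → Ω → ℝ :=
    fun i ω => ((i.elim (Y₀ ω, Z₀ ω) fun j => (Y j ω, Z j ω)).2 : ℝ) with hX
  have hmeas : ∀ i, Measurable (X i) := by
    rintro (_ | j)
    · exact measurable_from_nat.comp hZ₀
    · exact measurable_from_nat.comp (hZ j)
  have hind : iIndepFun X μ :=
    hindep.comp (fun _ p => (p.2 : ℝ)) fun _ => measurable_from_nat.comp measurable_snd
  have hidentX (j : ℕ) : IdentDistrib (X (some j)) (X (some 0)) μ μ :=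
    (hident j).comp (measurable_from_nat.comp measurable_snd)
  have hmgf₀ : mgf (X none) μ t ≤ M :=
    (mgf_le_integral_pow_add hR₁ ht_le hZ₀ hint₀).trans hint₀M
  have hmgf : mgf (X (some 0)) μ t ≤ exp (ζ * t + 8 * M / log R ^ 2 * t ^ 2) := by
    rw [← hζ]
    exact mgf_le_exp_of_mgf_le (fun ω => Nat.cast_nonneg _) (hmeas _).aemeasurable hlogR ht
      (integrable_exp_mul_of_integrable_pow_add hR₁ le_rfl (hZ 0) hint)
      ((mgf_le_integral_pow_add hR₁ le_rfl (hZ 0) hint).trans hintM)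
  have hset : {ω | Z₀ ω + ∑ j ∈ range n, Z j ω = m}
      = {ω | X none ω + ∑ j ∈ range n, X (some j) ω = m} := by
    ext ω; simp only [hX, Set.mem_ofPred_eq, Option.elim]; norm_cast
  calc μ.real {ω | Z₀ ω + ∑ j ∈ range n, Z j ω = m}
      ≤ exp (-t * m) * (mgf (X none) μ t * mgf (X (some 0)) μ t ^ n) := by
        rw [hset]
        exact measure_add_sum_eq_le hmeas hind hidentX
          (integrable_exp_mul_of_integrable_pow_add hR₁ ht_le hZ₀ hint₀)
          (integrable_exp_mul_of_integrable_pow_add hR₁ ht_le (hZ 0) hint) n m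
    _ ≤ exp (-t * m) * (M * exp (ζ * t + 8 * M / log R ^ 2 * t ^ 2) ^ n) := by
        have hM : 0 ≤ M := mgf_nonneg.trans hmgf₀
        gcongr exp _ * ?_
        exact mul_le_mul hmgf₀ (pow_le_pow_left₀ mgf_nonneg hmgf n) (pow_nonneg mgf_nonneg n) hM
    _ = M * exp (n * (ζ * t + 8 * M / log R ^ 2 * t ^ 2) - t * m) := by
        rw [← exp_nat_mul, sub_eq_add_neg, exp_add]; ring_nf

end

theorem branching_fraction_large_deviation_general (R M ζ c₀ : ℝ)
    (hR : 1 < R) (hM : 0 < M) (hc₀ : 0 < c₀) :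
    ∃ C > 0, ∃ c > 0,
      ∀ (Ω : Type) (_ : MeasurableSpace Ω) (μ : Measure Ω) (_ : IsProbabilityMeasure μ)
        (Y Z : ℕ → Ω → ℕ) (Y₀ Z₀ : Ω → ℕ),
        (∀ j, Measurable (Y j)) → (∀ j, Measurable (Z j)) →
        Measurable Y₀ → Measurable Z₀ →
        iIndepFun
          (fun (i : Option ℕ) ω => i.elim (Y₀ ω, Z₀ ω) (fun j => (Y j ω, Z j ω))) μ →
        (∀ j, IdentDistrib (fun ω => (Y j ω, Z j ω)) (fun ω => (Y 0 ω, Z 0 ω)) μ μ) →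
        Integrable (fun ω => R ^ (Y 0 ω + Z 0 ω)) μ →
        (∫ ω, R ^ (Y 0 ω + Z 0 ω) ∂μ) ≤ M →
        Integrable (fun ω => R ^ (Y₀ ω + Z₀ ω)) μ →
        (∫ ω, R ^ (Y₀ ω + Z₀ ω) ∂μ) ≤ M →
        (∫ ω, (Z 0 ω : ℝ) ∂μ) = ζ →
        ∀ N n : ℕ, 1 ≤ N → n ≤ N →
          c₀ ≤ |(n : ℝ) / N - 1 / (1 + ζ)| →
          μ {ω | (∀ k < n, 0 < (Y₀ ω : ℤ) + ∑ j ∈ Finset.range k, ((Y j ω : ℤ) - 1)) ∧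
              (Y₀ ω : ℤ) + ∑ j ∈ Finset.range n, ((Y j ω : ℤ) - 1) = 0 ∧
              Z₀ ω + ∑ j ∈ Finset.range n, Z j ω = N - n}
            ≤ ENNReal.ofReal (C * Real.exp (-c * N)) := by
  have hlogR : 0 < log R := log_pos hR
  set K := 8 * M / log R ^ 2
  set τ := min (c₀ / (2 * K)) (log R / 2)
  have hτ : 0 < τ := lt_min (by positivity) (by positivity)
  have hKτ : K * τ ≤ c₀ / 2 := by
    have := (le_div_iff₀ (by positivity)).1 (min_le_left (c₀ / (2 * K)) (log R / 2))
    linarith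
  refine ⟨M, hM, c₀ * τ / 2, by positivity, ?_⟩
  intro Ω _ μ _ Y Z Y₀ Z₀ _ hZ _ hZ₀ hindep hident hint hintM hint₀ hint₀M hζ N n hN hnN hfar
  have hζ_nonneg : 0 ≤ ζ := hζ ▸ integral_nonneg fun ω => Nat.cast_nonneg _
  have hD := mul_le_abs_sub_sub_mul_of_le_abs_div_sub hc₀.le hζ_nonneg
    (by exact_mod_cast hN : (0 : ℝ) < N) hfar
  obtain ⟨t, ht, hexp⟩ := exists_abs_eq_mul_sq_sub_mul_le hτ.le hKτ n.cast_nonneg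
    (by exact_mod_cast hnN) hc₀.le hD
  have hchernoff := measure_add_sum_eq_le_of_exp_moment hR hZ hZ₀ hindep hident hint hintM hint₀
    hint₀M hζ (ht.trans_le (min_le_right _ _)) n (N - n)
  calc μ _ ≤ μ {ω | Z₀ ω + ∑ j ∈ range n, Z j ω = N - n} := measure_mono fun ω hω => hω.2.2
    _ = ENNReal.ofReal (μ.real {ω | Z₀ ω + ∑ j ∈ range n, Z j ω = N - n}) :=
      (ofReal_measureReal).symm
    _ ≤ ENNReal.ofReal (M * exp (-(c₀ * τ / 2) * N)) := by
      refine ENNReal.ofReal_le_ofReal (hchernoff.trans ?_)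
      rw [Nat.cast_sub hnN]
      gcongr
      linarith

/-- **Chernoff-type large-deviation bound** for the two-type (sesqui-type) branching
process: the fraction of type-`L` particles concentrates near `x₀ = 1/(1+E Z)`. The
process starts with `(Y⁰, Z⁰)` particles of types `L`, `S`; each type-`L` particle
independently has offspring `(Y, Z)`; type-`S` particles are barren. The process is
represented by its exploration: with i.i.d. copies `(Y_j, Z_j)`, independent of
`(Y⁰, Z⁰)`, the event that there are exactly `n` type-`L` and `N−n` type-`S` particles
is that the walk `Y⁰ + ∑_{j<k}(Y_j − 1)` stays positive for `k < n`, hits `0` at `k = n`,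
and `Z⁰ + ∑_{j<n} Z_j = N−n`. Under the exponential moment conditions
`E[R^{Y+Z}] ≤ M`, `E[R^{Y⁰+Z⁰}] ≤ M` (`R > 1`) and `E Z = ζ`, there are `C, c > 0`
depending only on `R, M, ζ, c₀` such that `p_{n,N−n} ≤ C e^{−cN}` whenever
`|n/N − x₀| ≥ c₀`. -/
theorem branching_fraction_large_deviation (R M ζ c₀ : ℝ)
    (hR : 1 < R) (hM : 0 < M) (hζ : 0 ≤ ζ) (hc₀ : 0 < c₀) :
    ∃ C > 0, ∃ c > 0,
      ∀ (Ω : Type) (_ : MeasurableSpace Ω) (μ : Measure Ω) (_ : IsProbabilityMeasure μ)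
        (Y Z : ℕ → Ω → ℕ) (Y₀ Z₀ : Ω → ℕ),
        (∀ j, Measurable (Y j)) → (∀ j, Measurable (Z j)) →
        Measurable Y₀ → Measurable Z₀ →
        iIndepFun
          (fun (i : Option ℕ) ω => i.elim (Y₀ ω, Z₀ ω) (fun j => (Y j ω, Z j ω))) μ →
        (∀ j, IdentDistrib (fun ω => (Y j ω, Z j ω)) (fun ω => (Y 0 ω, Z 0 ω)) μ μ) →
        Integrable (fun ω => R ^ (Y 0 ω + Z 0 ω)) μ →
        (∫ ω, R ^ (Y 0 ω + Z 0 ω) ∂μ) ≤ M →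
        Integrable (fun ω => R ^ (Y₀ ω + Z₀ ω)) μ →
        (∫ ω, R ^ (Y₀ ω + Z₀ ω) ∂μ) ≤ M →
        (∫ ω, (Z 0 ω : ℝ) ∂μ) = ζ →
        ∀ N n : ℕ, 1 ≤ N → n ≤ N →
          c₀ ≤ |(n : ℝ) / N - 1 / (1 + ζ)| →
          μ {ω | (∀ k < n, 0 < (Y₀ ω : ℤ) + ∑ j ∈ Finset.range k, ((Y j ω : ℤ) - 1)) ∧
              (Y₀ ω : ℤ) + ∑ j ∈ Finset.range n, ((Y j ω : ℤ) - 1) = 0 ∧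
              Z₀ ω + ∑ j ∈ Finset.range n, Z j ω = N - n}
            ≤ ENNReal.ofReal (C * Real.exp (-c * N)) :=
  branching_fraction_large_deviation_general R M ζ c₀ hR hM hc₀
end

section
/- Let Y be an ℕ-valued random variable with E[R^Y] ≤ M for some R > 1, and let g_Y(y) = E[y^Y]. Define h_Y(x) := (1 − g_Y(1−x))/x for 0 < |x| < R−1, extended by h_Y(0) := E[Y]. Then h_Y is analytic on {x ∈ ℂ : |x| < R−1}, with h_Y(x) = Σ_{n≥0} (−1)^n·E[binom(Y, n+1)]·x^n; in particular h_Y(0) = E[Y] and h_Y'(0) = −E[Y(Y−1)]/2. -/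
/-!
Expanding `(1 - x) ^ Y = ∑ₖ binom(Y, k) (-x) ^ k`, the inequality
`binom(n, k) (R - 1) ^ k ≤ R ^ n` bounds the expectation of the `k`-th term by
`E[R ^ Y] (‖x‖ / (R - 1)) ^ k`, so for `‖x‖ < R - 1` expectation and sum may be interchanged:
`E[(1 - x) ^ Y] = ∑ₖ E[binom(Y, k)] (-x) ^ k`. As `E[binom(Y, 0)] = 1`, subtracting from `1` and
dividing by `x` leaves the power series `∑ₙ (-1) ^ n E[binom(Y, n + 1)] x ^ n`, whose coefficients
are `O((R - 1) ^ (-n))`.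
-/

open MeasureTheory Metric

theorem Nat.cast_choose_mul_pow_le_one_add_pow {α : Type*} [CommSemiring α] [PartialOrder α]
    [IsOrderedRing α] {s : α} (hs : 0 ≤ s) (n k : ℕ) :
    (n.choose k : α) * s ^ k ≤ (1 + s) ^ n := by
  rcases le_or_gt k n with hk | hk
  · rw [add_comm, add_pow, mul_comm]
    simp only [one_pow, mul_one]
    exact Finset.single_le_sum (f := fun j => s ^ j * (n.choose j : α))
      (fun j _ => by positivity) (Finset.mem_range.mpr (Nat.lt_succ_of_le hk))
  · rw [Nat.choose_eq_zero_of_lt hk, Nat.cast_zero, zero_mul]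
    exact pow_nonneg (add_nonneg zero_le_one hs) n

theorem Nat.cast_choose_le_pow_div_pow {R : ℝ} (hR : 1 < R) (n k : ℕ) :
    (n.choose k : ℝ) ≤ R ^ n / (R - 1) ^ k := by
  rw [le_div_iff₀ (pow_pos (sub_pos.mpr hR) k)]
  simpa using Nat.cast_choose_mul_pow_le_one_add_pow (sub_pos.mpr hR).le n k

theorem hasSum_choose_mul_pow {α : Type*} [CommSemiring α] [TopologicalSpace α]
    (n : ℕ) (x : α) : HasSum (fun k => (n.choose k : α) * x ^ k) ((1 + x) ^ n) := by
  have hsum : (1 + x) ^ n = ∑ k ∈ Finset.range (n + 1), (n.choose k : α) * x ^ k := by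
    rw [add_comm, add_pow]
    exact Finset.sum_congr rfl fun k _ => by ring
  rw [hsum]
  refine hasSum_sum_of_ne_finset_zero fun k hk => ?_
  rw [Nat.choose_eq_zero_of_lt (by simpa using hk), Nat.cast_zero, zero_mul]

namespace ProbabilityTheory

variable {Ω : Type*} [MeasurableSpace Ω] (μ : Measure Ω) (Y : Ω → ℕ)

noncomputable def binomialMoment (k : ℕ) : ℂ := ∫ ω, ((Y ω).choose k : ℂ) ∂μ

noncomputable def binomialMomentSeries : FormalMultilinearSeries ℂ ℂ ℂ :=
  .ofScalars ℂ fun n => (-1) ^ n * binomialMoment μ Y (n + 1)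

variable {μ Y}

theorem binomialMoment_zero [IsProbabilityMeasure μ] : binomialMoment μ Y 0 = 1 := by
  simp [binomialMoment]

theorem binomialMoment_one : binomialMoment μ Y 1 = ∫ ω, (Y ω : ℂ) ∂μ := by
  simp [binomialMoment]

theorem binomialMoment_two :
    binomialMoment μ Y 2 = (∫ ω, (Y ω : ℂ) * ((Y ω : ℂ) - 1) ∂μ) / 2 := by
  rw [binomialMoment, ← integral_div]
  simp only [Nat.cast_choose_two]

theorem binomialMomentSeries_sum_eq (x : ℂ) :
    (binomialMomentSeries μ Y).sum x = ∑' n, (-1) ^ n * binomialMoment μ Y (n + 1) * x ^ n :=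
  FormalMultilinearSeries.ofScalars_sum_eq _ x

section ExponentialMoment

variable {R : ℝ}

theorem integral_choose_le (hR : 1 < R) (hint : Integrable (fun ω => R ^ Y ω) μ) (k : ℕ) :
    ∫ ω, ((Y ω).choose k : ℝ) ∂μ ≤ (∫ ω, R ^ Y ω ∂μ) / (R - 1) ^ k := by
  rw [← integral_div]
  exact integral_mono_of_nonneg (ae_of_all _ fun _ => Nat.cast_nonneg _) (hint.div_const _)
    (ae_of_all _ fun ω => Nat.cast_choose_le_pow_div_pow hR (Y ω) k)

theorem norm_binomialMoment_le (hR : 1 < R) (hint : Integrable (fun ω => R ^ Y ω) μ) (k : ℕ) :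
    ‖binomialMoment μ Y k‖ ≤ (∫ ω, R ^ Y ω ∂μ) / (R - 1) ^ k :=
  (norm_integral_le_integral_norm _).trans <| by
    simpa only [Complex.norm_natCast] using integral_choose_le hR hint k

theorem integrable_choose (hY : Measurable Y) (hR : 1 < R)
    (hint : Integrable (fun ω => R ^ Y ω) μ) (k : ℕ) :
    Integrable (fun ω => ((Y ω).choose k : ℂ)) μ := by
  refine (hint.div_const ((R - 1) ^ k)).mono' ?_ (ae_of_all _ fun ω => ?_)
  · exact ((measurable_from_nat (f := fun n : ℕ => (n.choose k : ℂ))).comp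
      hY).aestronglyMeasurable
  · simpa only [Complex.norm_natCast] using Nat.cast_choose_le_pow_div_pow hR (Y ω) k

theorem le_radius_binomialMomentSeries (hR : 1 < R) (hint : Integrable (fun ω => R ^ Y ω) μ) :
    ENNReal.ofReal (R - 1) ≤ (binomialMomentSeries μ Y).radius := by
  have hs : 0 < R - 1 := sub_pos.mpr hR
  refine ENNReal.le_of_forall_nnreal_lt fun r hr => ?_
  have hrs : (r : ℝ) ≤ R - 1 := by
    rw [← ENNReal.ofReal_coe_nnreal, ENNReal.ofReal_lt_ofReal_iff hs] at hr
    exact hr.le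
  refine FormalMultilinearSeries.le_radius_of_bound _ ((∫ ω, R ^ Y ω ∂μ) / (R - 1))
    fun n => ?_
  rw [binomialMomentSeries, FormalMultilinearSeries.ofScalars_norm, norm_mul, norm_pow, norm_neg,
    norm_one, one_pow, one_mul]
  calc ‖binomialMoment μ Y (n + 1)‖ * r ^ n
      ≤ (∫ ω, R ^ Y ω ∂μ) / (R - 1) ^ (n + 1) * (R - 1) ^ n := by
        gcongr
        exact norm_binomialMoment_le hR hint _
    _ = (∫ ω, R ^ Y ω ∂μ) / (R - 1) := by field_simp; ring

theorem hasFPowerSeriesOnBall_binomialMomentSeries (hR : 1 < R)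
    (hint : Integrable (fun ω => R ^ Y ω) μ) :
    HasFPowerSeriesOnBall (binomialMomentSeries μ Y).sum (binomialMomentSeries μ Y) 0
      (ENNReal.ofReal (R - 1)) := by
  have hpos : 0 < ENNReal.ofReal (R - 1) := ENNReal.ofReal_pos.mpr (sub_pos.mpr hR)
  exact ((binomialMomentSeries μ Y).hasFPowerSeriesOnBall
    (hpos.trans_le (le_radius_binomialMomentSeries hR hint))).mono hpos
    (le_radius_binomialMomentSeries hR hint)

theorem hasSum_integral_one_sub_pow (hY : Measurable Y) (hR : 1 < R)
    (hint : Integrable (fun ω => R ^ Y ω) μ) {x : ℂ} (hx : ‖x‖ < R - 1) :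
    HasSum (fun k => binomialMoment μ Y k * (-x) ^ k) (∫ ω, (1 - x) ^ Y ω ∂μ) := by
  have hs : 0 < R - 1 := sub_pos.mpr hR
  have hsum : Summable fun k => ∫ ω, ‖((Y ω).choose k : ℂ) * (-x) ^ k‖ ∂μ := by
    refine Summable.of_nonneg_of_le (fun _ => integral_nonneg fun _ => norm_nonneg _) (fun k => ?_)
      ((summable_geometric_of_lt_one (by positivity) ((div_lt_one hs).mpr hx)).mul_left
        (∫ ω, R ^ Y ω ∂μ))
    simp only [norm_mul, norm_pow, norm_neg, Complex.norm_natCast]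
    rw [integral_mul_const, div_pow, ← mul_div_assoc, mul_div_right_comm]
    exact mul_le_mul_of_nonneg_right (integral_choose_le hR hint k) (by positivity)
  have hswap := hasSum_integral_of_summable_integral_norm
    (fun k => (integrable_choose hY hR hint k).mul_const ((-x) ^ k)) hsum
  simp only [integral_mul_const, fun ω => (hasSum_choose_mul_pow (Y ω) (-x)).tsum_eq,
    ← sub_eq_add_neg] at hswap
  exact hswap

theorem hasSum_one_sub_integral_one_sub_pow_div [IsProbabilityMeasure μ] (hY : Measurable Y)
    (hR : 1 < R) (hint : Integrable (fun ω => R ^ Y ω) μ) {x : ℂ} (hx : ‖x‖ < R - 1)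
    (hx0 : x ≠ 0) :
    HasSum (fun n => (-1) ^ n * binomialMoment μ Y (n + 1) * x ^ n)
      ((1 - ∫ ω, (1 - x) ^ Y ω ∂μ) / x) := by
  have hshift := (hasSum_nat_add_iff' 1).mpr (hasSum_integral_one_sub_pow hY hR hint hx)
  simp only [Finset.sum_range_one, binomialMoment_zero, pow_zero, mul_one] at hshift
  have hterm : (fun n => (-1) ^ n * binomialMoment μ Y (n + 1) * x ^ n) =
      fun n => binomialMoment μ Y (n + 1) * (-x) ^ (n + 1) / -x := by
    funext n
    rw [pow_succ, ← mul_assoc, mul_div_cancel_right₀ _ (neg_ne_zero.mpr hx0), neg_pow]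
    ring
  rw [hterm, ← neg_sub, neg_div, ← div_neg]
  exact hshift.div_const (-x)

end ExponentialMoment

end ProbabilityTheory

open ProbabilityTheory

theorem hY_analytic_series_general
    {Ω : Type*} [MeasurableSpace Ω] (μ : Measure Ω) [IsProbabilityMeasure μ]
    (Y : Ω → ℕ) (hY : Measurable Y) (R : ℝ) (hR : 1 < R)
    (hint : Integrable (fun ω => R ^ Y ω) μ) :
    ∃ h : ℂ → ℂ,
      AnalyticOnNhd ℂ h (ball (0 : ℂ) (R - 1)) ∧
      (∀ x ∈ ball (0 : ℂ) (R - 1), x ≠ 0 →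
        h x = (1 - ∫ ω, (1 - x) ^ Y ω ∂μ) / x) ∧
      h 0 = ∫ ω, (Y ω : ℂ) ∂μ ∧
      (∀ x ∈ ball (0 : ℂ) (R - 1),
        h x = ∑' n : ℕ, (-1) ^ n * (∫ ω, ((Y ω).choose (n + 1) : ℂ) ∂μ) * x ^ n) ∧
      deriv h 0 = -(∫ ω, (Y ω : ℂ) * ((Y ω : ℂ) - 1) ∂μ) / 2 := by
  have hps := hasFPowerSeriesOnBall_binomialMomentSeries hR hint
  refine ⟨(binomialMomentSeries μ Y).sum, ?_, fun x hx hx0 => ?_, ?_,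
    fun x _ => binomialMomentSeries_sum_eq x, ?_⟩
  · simpa only [eball_ofReal] using hps.analyticOnNhd
  · rw [binomialMomentSeries_sum_eq,
      (hasSum_one_sub_integral_one_sub_pow_div hY hR hint (mem_ball_zero_iff.mp hx) hx0).tsum_eq]
  · rw [binomialMomentSeries, ← FormalMultilinearSeries.ofScalarsSum,
      FormalMultilinearSeries.ofScalarsSum_zero]
    simp [binomialMoment_one]
  · rw [hps.hasFPowerSeriesAt.deriv, binomialMomentSeries,
      FormalMultilinearSeries.ofScalars_apply_eq, binomialMoment_two]
    ring

/-- For an `ℕ`-valued `Y` with `E[R^Y] ≤ M` (`R > 1`) and pgf `g_Y(y) = E[y^Y]`, the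
function `h_Y(x) = (1 − g_Y(1−x))/x` (with `h_Y(0) = E[Y]`) is analytic on
`{|x| < R−1}`, equals the power series `Σ_{n≥0} (−1)^n E[binom(Y,n+1)] xⁿ` there, and
satisfies `h_Y(0) = E[Y]` and `h_Y'(0) = −E[Y(Y−1)]/2`. -/
theorem hY_analytic_series
    {Ω : Type*} [MeasurableSpace Ω] (μ : Measure Ω) [IsProbabilityMeasure μ]
    (Y : Ω → ℕ) (hY : Measurable Y) (R M : ℝ) (hR : 1 < R)
    (hint : Integrable (fun ω => R ^ Y ω) μ) (hM : ∫ ω, R ^ Y ω ∂μ ≤ M) :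
    ∃ h : ℂ → ℂ,
      AnalyticOnNhd ℂ h (ball (0 : ℂ) (R - 1)) ∧
      (∀ x ∈ ball (0 : ℂ) (R - 1), x ≠ 0 →
        h x = (1 - ∫ ω, (1 - x) ^ Y ω ∂μ) / x) ∧
      h 0 = ∫ ω, (Y ω : ℂ) ∂μ ∧
      (∀ x ∈ ball (0 : ℂ) (R - 1),
        h x = ∑' n : ℕ, (-1) ^ n * (∫ ω, ((Y ω).choose (n + 1) : ℂ) ∂μ) * x ^ n) ∧
      deriv h 0 = -(∫ ω, (Y ω : ℂ) * ((Y ω : ℂ) - 1) ∂μ) / 2 :=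
  hY_analytic_series_general μ Y hY R hR hint
end

section
/- Let Y be an ℕ-valued random variable with E[R^Y] ≤ M for some R > 1 and M < ∞, satisfying E[Y] ≥ 1−δ and E[Y(Y−1)] ≥ 2δ for some δ > 0. Then there exist constants c₁, ε > 0 depending only on R, M, δ such that if |E[Y] − 1| < ε, there is a unique real ρ̂ with |ρ̂| < c₁ and (1 − g_Y(1−ρ̂))/ρ̂ = 1 (interpreting the left side as E[Y] when ρ̂ = 0); moreover c·|E[Y]−1| ≤ |ρ̂| ≤ C·|E[Y]−1| for constants c, C > 0 depending only on R, M, δ, and sign(ρ̂) = sign(E[Y]−1). -/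
/-!
For `x ≠ 0` one has `(1 - E[(1-x)^Y]) / x = E[∑_{j<Y} (1-x)^j]`, and the right-hand side is
the extension of `h_Y` to `x = 0`. With `D(a, b, n) = ∑_{j<n} ∑_{i<j} a^i b^{j-1-i}`,
`h_Y(x) - h_Y(y) = (y - x) E[D(1-x, 1-y, Y)]`. The exponential moment bounds `E[D]` above,
and for `a, b ≥ 1 - c` Bernoulli's inequality gives `D(a, b, n) ≥ n(n-1)/2 - c n³`, so on
`[-c₁, c₁]` with `c₁ E[Y³] ≤ δ/2` we get `E[D] ≥ δ/2`. Hence `h_Y` is strictly decreasing and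
bi-Lipschitz near `0` with `h_Y(0) = E[Y]`, and the intermediate value theorem gives the root,
its size `≍ |E[Y] - 1|` and its sign.
-/

open MeasureTheory Finset

universe u

theorem exists_pow_mul_pow_le_mul_pow (k : ℕ) {s R : ℝ} (hs : 0 ≤ s) (hsR : s < R) :
    ∃ K > 0, ∀ n : ℕ, (n : ℝ) ^ k * s ^ n ≤ K * R ^ n := by
  have hR : 0 < R := hs.trans_lt hsR
  have hq : ‖s / R‖ < 1 := by
    rwa [Real.norm_eq_abs, abs_of_nonneg (by positivity), div_lt_one hR]
  have hsum := summable_pow_mul_geometric_of_norm_lt_one k hq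
  have hpos : 0 ≤ ∑' n : ℕ, (n : ℝ) ^ k * (s / R) ^ n := tsum_nonneg fun n => by positivity
  refine ⟨(∑' n : ℕ, (n : ℝ) ^ k * (s / R) ^ n) + 1, by positivity, fun n => ?_⟩
  have hn := hsum.le_tsum n fun m _ => by positivity
  rw [div_pow, ← mul_div_assoc, div_le_iff₀ (by positivity)] at hn
  nlinarith [pow_pos hR n]

section SlopeBounds

variable {G : ℝ → ℝ} {a b c : ℝ}

theorem strictAntiOn_of_slope_ge (ha : 0 < a)
    (hlow : ∀ x ∈ Set.Icc (-c) c, ∀ y ∈ Set.Icc (-c) c, x < y → a * (y - x) ≤ G x - G y) :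
    StrictAntiOn G (Set.Icc (-c) c) := fun x hx y hy hxy => by
  nlinarith [hlow x hx y hy hxy]

theorem abs_sub_bounds_of_slope_bounds (ha : 0 ≤ a)
    (hlow : ∀ x ∈ Set.Icc (-c) c, ∀ y ∈ Set.Icc (-c) c, x < y → a * (y - x) ≤ G x - G y)
    (hup : ∀ x ∈ Set.Icc (-c) c, ∀ y ∈ Set.Icc (-c) c, x < y → G x - G y ≤ b * (y - x))
    {x y : ℝ} (hx : x ∈ Set.Icc (-c) c) (hy : y ∈ Set.Icc (-c) c) :
    a * |x - y| ≤ |G x - G y| ∧ |G x - G y| ≤ b * |x - y| := by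
  rcases lt_trichotomy x y with hxy | rfl | hyx
  · have := hlow x hx y hy hxy
    have := hup x hx y hy hxy
    rw [abs_sub_comm x, abs_of_pos (sub_pos.mpr hxy), abs_of_nonneg (by nlinarith)]
    exact ⟨by linarith, by linarith⟩
  · simp
  · have := hlow y hy x hx hyx
    have := hup y hy x hx hyx
    rw [abs_of_pos (sub_pos.mpr hyx), abs_sub_comm, abs_of_nonneg (by nlinarith)]
    exact ⟨by linarith, by linarith⟩

theorem continuousOn_of_slope_bounds (ha : 0 ≤ a)
    (hlow : ∀ x ∈ Set.Icc (-c) c, ∀ y ∈ Set.Icc (-c) c, x < y → a * (y - x) ≤ G x - G y)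
    (hup : ∀ x ∈ Set.Icc (-c) c, ∀ y ∈ Set.Icc (-c) c, x < y → G x - G y ≤ b * (y - x)) :
    ContinuousOn G (Set.Icc (-c) c) := by
  refine (LipschitzOnWith.of_dist_le' (K := b) fun _ hx _ hy => ?_).continuousOn
  simpa only [Real.dist_eq] using (abs_sub_bounds_of_slope_bounds ha hlow hup hx hy).2

theorem exists_unique_eq_of_slope_bounds {t : ℝ} (ha : 0 < a) (hb : 0 < b)
    (hlow : ∀ x ∈ Set.Icc (-c) c, ∀ y ∈ Set.Icc (-c) c, x < y → a * (y - x) ≤ G x - G y)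
    (hup : ∀ x ∈ Set.Icc (-c) c, ∀ y ∈ Set.Icc (-c) c, x < y → G x - G y ≤ b * (y - x))
    (h0 : |G 0 - t| < a * c) :
    (∃! x : ℝ, |x| < c ∧ G x = t) ∧
      ∀ x : ℝ, |x| < c → G x = t →
        b⁻¹ * |G 0 - t| ≤ |x| ∧ |x| ≤ a⁻¹ * |G 0 - t| ∧
        (0 < x ↔ t < G 0) ∧ (x < 0 ↔ G 0 < t) ∧ (x = 0 ↔ G 0 = t) := by
  have hc : 0 < c := pos_of_mul_pos_right ((abs_nonneg _).trans_lt h0) ha.le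
  have hmem : ∀ {x : ℝ}, |x| < c → x ∈ Set.Icc (-c) c := fun hx =>
    ⟨(abs_lt.mp hx).1.le, (abs_lt.mp hx).2.le⟩
  have h0mem : (0 : ℝ) ∈ Set.Icc (-c) c := hmem (by simpa using hc)
  have hanti := strictAntiOn_of_slope_ge ha hlow
  have hcont := continuousOn_of_slope_bounds ha.le hlow hup
  obtain ⟨h0lo, h0hi⟩ := abs_lt.mp h0
  have hright : G c < t := by
    have := hlow 0 h0mem c ⟨by linarith, le_rfl⟩ hc
    linarith
  have hleft : t < G (-c) := by
    have := hlow (-c) ⟨le_rfl, by linarith⟩ 0 h0mem (by linarith)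
    linarith
  obtain ⟨x₀, hx₀, hGx₀⟩ := intermediate_value_Ioo' (neg_le_self hc.le) hcont ⟨hright, hleft⟩
  have hx₀c : |x₀| < c := abs_lt.mpr hx₀
  refine ⟨⟨x₀, ⟨hx₀c, hGx₀⟩, fun y ⟨hy, hGy⟩ =>
    hanti.injOn (hmem hy) (hmem hx₀c) (hGy.trans hGx₀.symm)⟩, fun x hx hGx => ?_⟩
  have hlip := abs_sub_bounds_of_slope_bounds ha.le hlow hup h0mem (hmem hx)
  rw [zero_sub, abs_neg, hGx] at hlip
  refine ⟨(inv_mul_le_iff₀ hb).mpr hlip.2, (le_inv_mul_iff₀ ha).mpr hlip.1, ?_, ?_, ?_⟩ <;>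
    rw [← hGx]
  · exact (hanti.lt_iff_gt (hmem hx) h0mem).symm
  · exact (hanti.lt_iff_gt h0mem (hmem hx)).symm
  · rw [eq_comm (a := G 0), hanti.injOn.eq_iff (hmem hx) h0mem]

end SlopeBounds

/-- The divided difference `(P a - P b) / (a - b)` of `P z = ∑_{j<n} z^j`. -/
def geomSumSlope (a b : ℝ) (n : ℕ) : ℝ :=
  ∑ j ∈ range n, ∑ i ∈ range j, a ^ i * b ^ (j - 1 - i)

theorem sum_pow_sub_sum_pow (a b : ℝ) (n : ℕ) :
    ∑ j ∈ range n, a ^ j - ∑ j ∈ range n, b ^ j = (a - b) * geomSumSlope a b n := by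
  rw [geomSumSlope, ← sum_sub_distrib, mul_sum]
  exact sum_congr rfl fun j _ => by rw [← geom_sum₂_mul, mul_comm]

theorem geomSumSlope_nonneg {a b : ℝ} (n : ℕ) (ha : 0 ≤ a) (hb : 0 ≤ b) :
    0 ≤ geomSumSlope a b n :=
  sum_nonneg fun _ _ => sum_nonneg fun _ _ => by positivity

theorem geomSumSlope_le {a b s : ℝ} (n : ℕ) (hs : 1 ≤ s) (ha₀ : 0 ≤ a) (ha : a ≤ s)
    (hb₀ : 0 ≤ b) (hb : b ≤ s) : geomSumSlope a b n ≤ n ^ 2 * s ^ n := by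
  have hterm : ∀ j ∈ range n, ∀ i ∈ range j, a ^ i * b ^ (j - 1 - i) ≤ s ^ n := by
    intro j hj i hi
    have hexp : i + (j - 1 - i) ≤ n := by
      rw [mem_range] at hj hi
      omega
    calc a ^ i * b ^ (j - 1 - i) ≤ s ^ i * s ^ (j - 1 - i) := by gcongr
      _ = s ^ (i + (j - 1 - i)) := (pow_add _ _ _).symm
      _ ≤ s ^ n := pow_le_pow_right₀ hs hexp
  calc geomSumSlope a b n ≤ ∑ j ∈ range n, ∑ _i ∈ range j, s ^ n :=
        sum_le_sum fun j hj => sum_le_sum (hterm j hj)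
    _ ≤ ∑ _j ∈ range n, (n : ℝ) * s ^ n := by
        refine sum_le_sum fun j hj => ?_
        rw [sum_const, card_range, nsmul_eq_mul]
        gcongr
        exact_mod_cast (mem_range.mp hj).le
    _ = n ^ 2 * s ^ n := by
        rw [sum_const, card_range, nsmul_eq_mul]
        ring

theorem geomSumSlope_ge {a b c : ℝ} (n : ℕ) (hc₀ : 0 ≤ c) (hc₁ : c ≤ 1) (ha : 1 - c ≤ a)
    (hb : 1 - c ≤ b) : n * (n - 1) / 2 - c * n ^ 3 ≤ geomSumSlope a b n := by
  have ha₀ : 0 ≤ a := by linarith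
  have hb₀ : 0 ≤ b := by linarith
  have hinner : ∀ j ∈ range n, (j : ℝ) - c * n ^ 2 ≤ ∑ i ∈ range j, a ^ i * b ^ (j - 1 - i) := by
    intro j hj
    have hjn : (j : ℝ) ≤ n := by exact_mod_cast (mem_range.mp hj).le
    obtain _ | k := j
    · simp only [CharP.cast_eq_zero, range_zero, sum_empty]
      linarith [mul_nonneg hc₀ (sq_nonneg (n : ℝ))]
    have hterm : ∀ i ∈ range (k + 1), (1 - c) ^ k ≤ a ^ i * b ^ (k + 1 - 1 - i) := by
      intro i hi
      have hexp : i + (k + 1 - 1 - i) = k := by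
        rw [mem_range] at hi
        omega
      calc (1 - c) ^ k = (1 - c) ^ i * (1 - c) ^ (k + 1 - 1 - i) := by rw [← pow_add, hexp]
        _ ≤ a ^ i * b ^ (k + 1 - 1 - i) := by gcongr
    have hbern : 1 - k * c ≤ (1 - c) ^ k := by
      simpa [sub_eq_add_neg] using one_add_mul_le_pow (a := -c) (by linarith) k
    have hsum := sum_le_sum hterm
    rw [sum_const, card_range, nsmul_eq_mul] at hsum
    push_cast at hjn hsum ⊢
    have hkn : ((k : ℝ) + 1) * k ≤ n ^ 2 := by nlinarith
    nlinarith [mul_le_mul_of_nonneg_left hbern (by positivity : (0 : ℝ) ≤ k + 1),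
      mul_le_mul_of_nonneg_left hkn hc₀]
  have hgauss : ∀ m : ℕ, ∑ j ∈ range m, (j : ℝ) = m * (m - 1) / 2 := by
    intro m
    induction m with
    | zero => simp
    | succ m ih =>
      rw [sum_range_succ, ih]
      push_cast
      ring
  calc (n : ℝ) * (n - 1) / 2 - c * n ^ 3 = ∑ j ∈ range n, ((j : ℝ) - c * n ^ 2) := by
        rw [sum_sub_distrib, hgauss, sum_const, card_range, nsmul_eq_mul]
        ring
    _ ≤ geomSumSlope a b n := sum_le_sum hinner

section Moments

variable {Ω : Type*} [MeasurableSpace Ω] {μ : Measure Ω} {Y : Ω → ℕ} {R : ℝ}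

theorem integrable_comp_of_abs_le_mul_pow (hY : Measurable Y)
    (hR : Integrable (fun ω => R ^ Y ω) μ) {φ : ℕ → ℝ} {K : ℝ} (hφ : ∀ n, |φ n| ≤ K * R ^ n) :
    Integrable (fun ω => φ (Y ω)) μ :=
  (hR.const_mul K).mono' (measurable_from_top.comp hY).aestronglyMeasurable
    (ae_of_all _ fun ω => hφ (Y ω))

theorem integral_comp_le_mul_integral_pow (hR : Integrable (fun ω => R ^ Y ω) μ) {φ : ℕ → ℝ}
    {K : ℝ} (hφY : Integrable (fun ω => φ (Y ω)) μ) (hφ : ∀ n, φ n ≤ K * R ^ n) :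
    ∫ ω, φ (Y ω) ∂μ ≤ K * ∫ ω, R ^ Y ω ∂μ := by
  rw [← integral_const_mul]
  exact integral_mono hφY (hR.const_mul K) fun ω => hφ (Y ω)

/-- The function `h_Y`, written so that no case split at `x = 0` is needed. -/
noncomputable def geomSumMean (μ : Measure Ω) (Y : Ω → ℕ) (x : ℝ) : ℝ :=
  ∫ ω, ∑ j ∈ range (Y ω), (1 - x) ^ j ∂μ

theorem geomSumMean_eq_ite [IsProbabilityMeasure μ] (hY : Measurable Y)
    (hR : Integrable (fun ω => R ^ Y ω) μ) {x : ℝ} (hx : |1 - x| ≤ R) :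
    geomSumMean μ Y x =
      if x = 0 then ∫ ω, (Y ω : ℝ) ∂μ else (1 - ∫ ω, (1 - x) ^ Y ω ∂μ) / x := by
  split_ifs with hx0
  · simp [geomSumMean, hx0]
  have hpow : Integrable (fun ω => (1 - x) ^ Y ω) μ :=
    integrable_comp_of_abs_le_mul_pow hY hR (K := 1) fun n => by
      rw [abs_pow, one_mul]
      exact pow_le_pow_left₀ (abs_nonneg _) hx n
  have hsum : ∀ n : ℕ, ∑ j ∈ range n, (1 - x) ^ j = (1 - (1 - x) ^ n) / x := fun n => by
    rw [geom_sum_eq (by simpa [sub_eq_self] using hx0), ← neg_div_neg_eq]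
    ring_nf
  simp only [geomSumMean, hsum, integral_div,
    integral_sub (integrable_const 1) hpow, integral_const, probReal_univ, one_smul]

variable {s : ℝ}

theorem integrable_geomSum (hY : Measurable Y) (hR : Integrable (fun ω => R ^ Y ω) μ)
    {K : ℝ} (hK : ∀ n : ℕ, (n : ℝ) ^ 2 * s ^ n ≤ K * R ^ n) (hs : 1 ≤ s) {a : ℝ} (ha₀ : 0 ≤ a)
    (ha : a ≤ s) : Integrable (fun ω => ∑ j ∈ range (Y ω), a ^ j) μ := by
  refine integrable_comp_of_abs_le_mul_pow (φ := fun n => ∑ j ∈ range n, a ^ j) hY hR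
    fun n => le_trans ?_ (hK n)
  calc |∑ j ∈ range n, a ^ j| = ∑ j ∈ range n, a ^ j := abs_of_nonneg (by positivity)
    _ ≤ ∑ _j ∈ range n, s ^ n := sum_le_sum fun j hj =>
        (pow_le_pow_left₀ ha₀ ha j).trans (pow_le_pow_right₀ hs (mem_range.mp hj).le)
    _ = n * s ^ n := by rw [sum_const, card_range, nsmul_eq_mul]
    _ ≤ n ^ 2 * s ^ n := by
        gcongr
        exact_mod_cast Nat.le_self_pow two_ne_zero n

theorem integrable_geomSumSlope (hY : Measurable Y) (hR : Integrable (fun ω => R ^ Y ω) μ)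
    {K : ℝ} (hK : ∀ n : ℕ, (n : ℝ) ^ 2 * s ^ n ≤ K * R ^ n) (hs : 1 ≤ s) {a b : ℝ}
    (ha₀ : 0 ≤ a) (ha : a ≤ s) (hb₀ : 0 ≤ b) (hb : b ≤ s) :
    Integrable (fun ω => geomSumSlope a b (Y ω)) μ :=
  integrable_comp_of_abs_le_mul_pow hY hR fun n => by
    rw [abs_of_nonneg (geomSumSlope_nonneg n ha₀ hb₀)]
    exact (geomSumSlope_le n hs ha₀ ha hb₀ hb).trans (hK n)

theorem integral_geomSumSlope_ge (hR : Integrable (fun ω => R ^ Y ω) μ) {K c a b : ℝ}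
    (hK : ∀ n : ℕ, (n : ℝ) ^ 3 ≤ K * R ^ n) (hc₀ : 0 ≤ c) (hc₁ : c ≤ 1) (ha : 1 - c ≤ a)
    (hb : 1 - c ≤ b) (hD : Integrable (fun ω => geomSumSlope a b (Y ω)) μ) :
    (∫ ω, (Y ω : ℝ) * ((Y ω : ℝ) - 1) ∂μ) / 2 ≤
      ∫ ω, geomSumSlope a b (Y ω) ∂μ + c * K * ∫ ω, R ^ Y ω ∂μ := by
  have hpt : ∀ n : ℕ, (n : ℝ) * (n - 1) / 2 ≤ geomSumSlope a b n + c * K * R ^ n := fun n => by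
    have := geomSumSlope_ge n hc₀ hc₁ ha hb
    nlinarith [mul_le_mul_of_nonneg_left (hK n) hc₀]
  have hnonneg : ∀ n : ℕ, 0 ≤ (n : ℝ) * (n - 1) / 2 := fun n => by
    rcases n with _ | n
    · simp
    · push_cast
      rw [add_sub_cancel_right]
      positivity
  rw [← integral_div, ← integral_const_mul, ← integral_add hD (hR.const_mul _)]
  exact integral_mono_of_nonneg (ae_of_all _ fun ω => hnonneg (Y ω))
    (hD.add (hR.const_mul _)) (ae_of_all _ fun ω => hpt (Y ω))

theorem geomSumMean_slope_bounds {M δ c K₁ K₂ : ℝ} (hY : Measurable Y)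
    (hR : Integrable (fun ω => R ^ Y ω) μ) (hRM : ∫ ω, R ^ Y ω ∂μ ≤ M)
    (hYY : 2 * δ ≤ ∫ ω, (Y ω : ℝ) * ((Y ω : ℝ) - 1) ∂μ)
    (hK₁ : ∀ n : ℕ, (n : ℝ) ^ 3 ≤ K₁ * R ^ n) (hK₂ : ∀ n : ℕ, (n : ℝ) ^ 2 * s ^ n ≤ K₂ * R ^ n)
    (hc₀ : 0 ≤ c) (hc₁ : c ≤ 1) (hcs : 1 + c ≤ s) (hcδ : c * K₁ * M ≤ δ / 2)
    {x y : ℝ} (hx : x ∈ Set.Icc (-c) c) (hy : y ∈ Set.Icc (-c) c) (hxy : x < y) :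
    δ / 2 * (y - x) ≤ geomSumMean μ Y x - geomSumMean μ Y y ∧
      geomSumMean μ Y x - geomSumMean μ Y y ≤ K₂ * M * (y - x) := by
  obtain ⟨hx₁, hx₂⟩ := hx
  obtain ⟨hy₁, hy₂⟩ := hy
  have hs : 1 ≤ s := by linarith
  have hK₁₀ : 0 ≤ K₁ := by simpa using hK₁ 0
  have hK₂₀ : 0 ≤ K₂ := by simpa using hK₂ 0
  have hD := integrable_geomSumSlope hY hR hK₂ hs (a := 1 - x) (b := 1 - y)
    (by linarith) (by linarith) (by linarith) (by linarith)
  have hdiff : geomSumMean μ Y x - geomSumMean μ Y y =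
      (y - x) * ∫ ω, geomSumSlope (1 - x) (1 - y) (Y ω) ∂μ := by
    rw [geomSumMean, geomSumMean,
      ← integral_sub (integrable_geomSum hY hR hK₂ hs (by linarith) (by linarith))
        (integrable_geomSum hY hR hK₂ hs (by linarith) (by linarith)),
      ← integral_const_mul]
    congr 1 with ω
    rw [sum_pow_sub_sum_pow]
    ring
  have hupper : ∫ ω, geomSumSlope (1 - x) (1 - y) (Y ω) ∂μ ≤ K₂ * M :=
    (integral_comp_le_mul_integral_pow hR hD fun n =>
      (geomSumSlope_le n hs (by linarith) (by linarith) (by linarith) (by linarith)).trans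
        (hK₂ n)).trans (mul_le_mul_of_nonneg_left hRM hK₂₀)
  have hlower : δ / 2 ≤ ∫ ω, geomSumSlope (1 - x) (1 - y) (Y ω) ∂μ := by
    have := integral_geomSumSlope_ge hR hK₁ hc₀ hc₁ (by linarith) (by linarith) hD
    have := mul_le_mul_of_nonneg_left hRM (mul_nonneg hc₀ hK₁₀)
    linarith
  rw [hdiff]
  constructor <;> nlinarith

end Moments

theorem exists_uniform_slope_bounds {R M δ : ℝ} (hR : 1 < R) (hM : 0 < M) (hδ : 0 < δ) :
    ∃ c₁ > 0, ∃ L > 0, c₁ ≤ R - 1 ∧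
      ∀ {Ω : Type u} [MeasurableSpace Ω] {μ : Measure Ω} {Y : Ω → ℕ}, Measurable Y →
        Integrable (fun ω => R ^ Y ω) μ → ∫ ω, R ^ Y ω ∂μ ≤ M →
        2 * δ ≤ ∫ ω, (Y ω : ℝ) * ((Y ω : ℝ) - 1) ∂μ →
        ∀ x ∈ Set.Icc (-c₁) c₁, ∀ y ∈ Set.Icc (-c₁) c₁, x < y →
          δ / 2 * (y - x) ≤ geomSumMean μ Y x - geomSumMean μ Y y ∧
            geomSumMean μ Y x - geomSumMean μ Y y ≤ L * (y - x) := by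
  obtain ⟨K₁, hK₁₀, hK₁⟩ := exists_pow_mul_pow_le_mul_pow 3 zero_le_one hR
  obtain ⟨K₂, hK₂₀, hK₂⟩ :=
    exists_pow_mul_pow_le_mul_pow 2 (s := (1 + R) / 2) (R := R) (by positivity) (by linarith)
  set c₁ := min 1 (min ((R - 1) / 2) (δ / (2 * K₁ * M)))
  have hc₁₀ : 0 < c₁ := lt_min one_pos (lt_min (by linarith) (by positivity))
  have hc₁₁ : c₁ ≤ 1 := min_le_left _ _
  have hc₁R : c₁ ≤ (R - 1) / 2 := (min_le_right _ _).trans (min_le_left _ _)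
  have hc₁δ : c₁ * K₁ * M ≤ δ / 2 := by
    have h : c₁ ≤ δ / (2 * K₁ * M) := (min_le_right _ _).trans (min_le_right _ _)
    rw [le_div_iff₀ (by positivity)] at h
    linarith
  refine ⟨c₁, hc₁₀, K₂ * M, by positivity, by linarith, fun hY hR hRM hYY x hx y hy hxy => ?_⟩
  exact geomSumMean_slope_bounds hY hR hRM hYY (by simpa using hK₁) hK₂ hc₁₀.le hc₁₁
    (by linarith) hc₁δ hx hy hxy

/-- Existence, uniqueness and linear-order asymptotics of the root of `h_Y(x) = 1`,
where `h_Y(x) = (1 − g_Y(1−x))/x` (interpreted as `E[Y]` at `x = 0`) and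
`g_Y(y) = E[y^Y]`. Under `E[R^Y] ≤ M` (`R > 1`), `E[Y] ≥ 1−δ`, `E[Y(Y−1)] ≥ 2δ`, there
are constants `c₁, ε, c, C > 0` depending only on `R, M, δ` such that if
`|E[Y] − 1| < ε` then there is a unique `ρ̂` with `|ρ̂| < c₁` and `h_Y(ρ̂) = 1`, it
satisfies `c|E[Y]−1| ≤ |ρ̂| ≤ C|E[Y]−1|`, and `sign ρ̂ = sign (E[Y]−1)`. -/
theorem hY_root_exists_unique (R M δ : ℝ) (hR : 1 < R) (hM : 0 < M) (hδ : 0 < δ) :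
    ∃ c₁ > 0, ∃ ε > 0, ∃ c > 0, ∃ C > 0,
      ∀ (Ω : Type) (_ : MeasurableSpace Ω) (μ : Measure Ω) (_ : IsProbabilityMeasure μ)
        (Y : Ω → ℕ),
        Measurable Y →
        Integrable (fun ω => R ^ Y ω) μ →
        (∫ ω, R ^ Y ω ∂μ) ≤ M →
        (1 - δ ≤ ∫ ω, (Y ω : ℝ) ∂μ) →
        (2 * δ ≤ ∫ ω, (Y ω : ℝ) * ((Y ω : ℝ) - 1) ∂μ) →
        |(∫ ω, (Y ω : ℝ) ∂μ) - 1| < ε →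
        ∀ H : ℝ → ℝ,
          H = (fun x => if x = 0 then ∫ ω, (Y ω : ℝ) ∂μ
            else (1 - ∫ ω, (1 - x) ^ Y ω ∂μ) / x) →
          (∃! x : ℝ, |x| < c₁ ∧ H x = 1) ∧
          ∀ x : ℝ, |x| < c₁ → H x = 1 →
            c * |(∫ ω, (Y ω : ℝ) ∂μ) - 1| ≤ |x| ∧
            |x| ≤ C * |(∫ ω, (Y ω : ℝ) ∂μ) - 1| ∧
            (0 < x ↔ 1 < ∫ ω, (Y ω : ℝ) ∂μ) ∧
            (x < 0 ↔ (∫ ω, (Y ω : ℝ) ∂μ) < 1) ∧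
            (x = 0 ↔ (∫ ω, (Y ω : ℝ) ∂μ) = 1) := by
  obtain ⟨c₁, hc₁, L, hL, hc₁R, hslope⟩ := exists_uniform_slope_bounds hR hM hδ
  refine ⟨c₁, hc₁, δ / 2 * c₁, by positivity, L⁻¹, by positivity, (δ / 2)⁻¹, by positivity,
    fun Ω _ μ _ Y hY hRint hRM _ hYY hε H hH => ?_⟩
  have hHG : ∀ x ∈ Set.Icc (-c₁) c₁, H x = geomSumMean μ Y x := fun x hx => by
    rw [hH, geomSumMean_eq_ite hY hRint (abs_le.mpr ⟨by linarith [hx.2], by linarith [hx.1]⟩)]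
  have hH0 : H 0 = ∫ ω, (Y ω : ℝ) ∂μ := by simp [hH]
  have key := exists_unique_eq_of_slope_bounds (G := H) (by positivity) hL
    (fun x hx y hy hxy => by
      simpa only [hHG x hx, hHG y hy] using (hslope hY hRint hRM hYY x hx y hy hxy).1)
    (fun x hx y hy hxy => by
      simpa only [hHG x hx, hHG y hy] using (hslope hY hRint hRM hYY x hx y hy hxy).2)
    (hH0 ▸ hε)
  rwa [hH0] at key
end
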